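/- arXiv:2009.04616 — 3 statements merged into one kernel-verified Lean document; each statement's English description precedes it below -/
import Mathlib

section
/- There exists an absolute constant C > 0 such that for all signs ε₀, ε₁, ε₂, ε₃ ∈ {−1, +1}, all real numbers N₁₂, N₁, N₃ ≥ 1, and all m ∈ ℤ, the number of triples (q, n₁, n₃) ∈ (ℤ³)³ with ⟨q⟩ ∼ N₁₂, ⟨n₁⟩ ∼ N₁, ⟨n₃⟩ ∼ N₃ and |ε₀⟨q + n₃⟩ + ε₁⟨n₁⟩ + ε₂⟨q − n₁⟩ + ε₃⟨n₃⟩ − m| ≤ 1 is at most C · min(N₁₂, max(N₁, N₃))⁻¹ · (N₁₂ N₁ N₃)³. (Here q plays the role of n₁₂ and q − n₁ the role of n₂.) -/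
noncomputable section

/-- The Japanese bracket `⟨n⟩ := (1 + |n|²)^(1/2)` of a lattice point `n ∈ ℤ³`. -/
def jap (n : Fin 3 → ℤ) : ℝ := Real.sqrt (1 + ∑ i, ((n i : ℝ)) ^ 2)

/-- The Japanese bracket `⟨m⟩ := (1 + m²)^(1/2)` of an integer `m`. -/
def japZ (m : ℤ) : ℝ := Real.sqrt (1 + (m : ℝ) ^ 2)

/-- Dyadic localization `⟨n⟩ ∼ N`, i.e. `N ≤ ⟨n⟩ ≤ 2N`. -/
def dy (N : ℝ) (n : Fin 3 → ℤ) : Prop := N ≤ jap n ∧ jap n ≤ 2 * N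

open Classical in
/-- The real-valued indicator `1{P}` of a proposition `P`. -/
def ind (P : Prop) : ℝ := if P then 1 else 0

/-- `ε ∈ {-1, +1}`. -/
def IsSign (ε : ℝ) : Prop := ε = 1 ∨ ε = -1

/-- The median of three real numbers. -/
def med3 (a b c : ℝ) : ℝ := max (min a b) (min (max a b) c)

/-- The cubic phase `φ(n₁,n₂,n₃) = ε₀⟨n₁₂₃⟩ + ε₁⟨n₁⟩ + ε₂⟨n₂⟩ + ε₃⟨n₃⟩`. -/
def phase3 (ε₀ ε₁ ε₂ ε₃ : ℝ) (n₁ n₂ n₃ : Fin 3 → ℤ) : ℝ :=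
  ε₀ * jap (n₁ + n₂ + n₃) + ε₁ * jap n₁ + ε₂ * jap n₂ + ε₃ * jap n₃

/-- The symmetrization `V̂_S(n₁,n₂,n₃) := (1/6) Σ_{π ∈ S₃} V̂(n_{π(1)} + n_{π(2)})`,
written out over the six permutations of `{1,2,3}`. -/
def VS (V : (Fin 3 → ℤ) → ℂ) (n₁ n₂ n₃ : Fin 3 → ℤ) : ℂ :=
  (V (n₁ + n₂) + V (n₂ + n₁) + V (n₁ + n₃) + V (n₃ + n₁) + V (n₂ + n₃) + V (n₃ + n₂)) / 6

open MeasureTheory Set ENNReal Real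
open scoped RealInnerProductSpace

abbrev E2 := EuclideanSpace ℝ (Fin 2)

abbrev E3 := EuclideanSpace ℝ (Fin 3)

def emb (n : Fin 3 → ℤ) : E3 := WithLp.toLp 2 (fun i => (n i : ℝ))

lemma emb_add (n a : Fin 3 → ℤ) : emb (n + a) = emb n + emb a := by
  ext i
  show ((n i + a i : ℤ) : ℝ) = (n i : ℝ) + (a i : ℝ)
  push_cast; ring

lemma norm_emb_sq (n : Fin 3 → ℤ) : ‖emb n‖ ^ 2 = ∑ i, ((n i : ℝ)) ^ 2 := by
  rw [EuclideanSpace.norm_eq]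
  rw [Real.sq_sqrt (by positivity)]
  simp [emb, sq_abs]

def japR (x : E3) : ℝ := Real.sqrt (1 + ‖x‖ ^ 2)

lemma jap_eq_japR (n : Fin 3 → ℤ) : jap n = japR (emb n) := by
  rw [jap, japR, norm_emb_sq]

lemma one_le_japR (x : E3) : 1 ≤ japR x := by
  have h1 := Real.sq_sqrt (show (0:ℝ) ≤ 1 + ‖x‖^2 by positivity)
  have h2 := Real.sqrt_nonneg (1 + ‖x‖^2)
  rw [japR]; nlinarith [sq_nonneg ‖x‖]

lemma norm_le_japR (x : E3) : ‖x‖ ≤ japR x := by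
  have h1 := Real.sq_sqrt (show (0:ℝ) ≤ 1 + ‖x‖^2 by positivity)
  have h2 := Real.sqrt_nonneg (1 + ‖x‖^2)
  rw [japR]; nlinarith [norm_nonneg x]

lemma japR_le (x : E3) : japR x ≤ ‖x‖ + 1 := by
  rw [japR]
  have h : (1 + ‖x‖^2) ≤ (‖x‖+1)^2 := by nlinarith [norm_nonneg x]
  calc Real.sqrt (1 + ‖x‖^2) ≤ Real.sqrt ((‖x‖+1)^2) := Real.sqrt_le_sqrt h
    _ = ‖x‖ + 1 := Real.sqrt_sq (by positivity)

lemma sqrt_sub_sqrt_le {s t : ℝ} (hs : 0 ≤ s) (ht : 0 ≤ t) :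
    Real.sqrt (1 + s^2) ≤ Real.sqrt (1 + t^2) + |s - t| := by
  have h1 : t ≤ Real.sqrt (1 + t^2) := by
    have ha := Real.sq_sqrt (show (0:ℝ) ≤ 1 + t^2 by positivity)
    have hb := Real.sqrt_nonneg (1 + t^2)
    nlinarith
  have h2 : (0:ℝ) ≤ Real.sqrt (1 + t^2) := Real.sqrt_nonneg _
  have h3 : 1 + s^2 ≤ (Real.sqrt (1 + t^2) + |s - t|)^2 := by
    have h4 : Real.sqrt (1+t^2)^2 = 1 + t^2 := Real.sq_sqrt (by positivity)
    have h5 : s - t ≤ |s - t| := le_abs_self _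
    have h6 : (0:ℝ) ≤ |s - t| := abs_nonneg _
    nlinarith [sq_abs (s - t)]
  calc Real.sqrt (1 + s^2) ≤ Real.sqrt ((Real.sqrt (1 + t^2) + |s - t|)^2) :=
        Real.sqrt_le_sqrt h3
    _ = _ := Real.sqrt_sq (by positivity)

lemma abs_japR_sub (x y : E3) : |japR x - japR y| ≤ ‖x - y‖ := by
  have h1 := sqrt_sub_sqrt_le (norm_nonneg x) (norm_nonneg y)
  have h2 := sqrt_sub_sqrt_le (norm_nonneg y) (norm_nonneg x)
  have hxy : |‖x‖ - ‖y‖| ≤ ‖x - y‖ := abs_norm_sub_norm_le x y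
  have hyx : |‖y‖ - ‖x‖| ≤ ‖y - x‖ := abs_norm_sub_norm_le y x
  rw [norm_sub_rev y x] at hyx
  rw [japR, japR, abs_le]
  constructor <;> [linarith [h2]; linarith [h1]]

-- box counting
lemma jap_sq (n : Fin 3 → ℤ) : (jap n)^2 = 1 + ∑ i, ((n i : ℝ))^2 := by
  rw [jap]; exact Real.sq_sqrt (by positivity)

lemma jap_nonneg (n : Fin 3 → ℤ) : 0 ≤ jap n := Real.sqrt_nonneg _

lemma coord_le_of_jap_le {n : Fin 3 → ℤ} {B : ℝ} (h : jap n ≤ B) (i : Fin 3) :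
    |(n i : ℝ)| ≤ B := by
  have h0 : (0:ℝ) ≤ B := le_trans (jap_nonneg n) h
  have h1 : ((n i : ℝ))^2 ≤ ∑ j, ((n j : ℝ))^2 :=
    Finset.single_le_sum (f := fun j => ((n j : ℝ))^2) (fun j _ => sq_nonneg _)
      (Finset.mem_univ i)
  have h2 : (jap n)^2 ≤ B^2 := by nlinarith [jap_nonneg n]
  rw [jap_sq] at h2
  rw [abs_le]; constructor <;> nlinarith

def box (B : ℝ) : Finset (Fin 3 → ℤ) :=
  Fintype.piFinset (fun _ => Finset.Icc (-⌊B⌋) ⌊B⌋)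

lemma mem_box {n : Fin 3 → ℤ} {B : ℝ} (h : jap n ≤ B) : n ∈ box B := by
  rw [box, Fintype.mem_piFinset]
  intro i
  have := coord_le_of_jap_le h i
  rw [abs_le] at this
  rw [Finset.mem_Icc]
  constructor
  · rw [neg_le, Int.le_floor]
    push_cast
    linarith [this.1]
  · rw [Int.le_floor]; exact this.2

lemma box_card {B : ℝ} (hB : 1 ≤ B) : ((box B).card : ℝ) ≤ 27 * B^3 := by
  have h1 : (box B).card = ((Finset.Icc (-⌊B⌋) ⌊B⌋).card)^3 := by
    rw [box, Fintype.card_piFinset]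
    simp [Finset.prod_const]
  have h2 : (Finset.Icc (-⌊B⌋) ⌊B⌋).card = (2*⌊B⌋+1).toNat := by
    rw [Int.card_Icc]; congr 1; ring
  have hfl : (1:ℤ) ≤ ⌊B⌋ := by rwa [Int.le_floor, Int.cast_one]
  have h3 : ((2*⌊B⌋+1).toNat : ℝ) ≤ 3*B := by
    have : ((2*⌊B⌋+1).toNat : ℤ) = 2*⌊B⌋+1 := Int.toNat_of_nonneg (by omega)
    have h4 : ((2*⌊B⌋+1 : ℤ) : ℝ) ≤ 3*B := by
      push_cast
      have := Int.floor_le B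
      linarith
    calc ((2*⌊B⌋+1).toNat : ℝ) = ((2*⌊B⌋+1 : ℤ) : ℝ) := by exact_mod_cast this
      _ ≤ 3*B := h4
  calc ((box B).card : ℝ) = (((2*⌊B⌋+1).toNat : ℝ))^3 := by rw [h1, h2]; push_cast; ring
    _ ≤ (3*B)^3 := by
        apply pow_le_pow_left₀ (by positivity) h3
    _ = 27 * B^3 := by ring

-- cubes
def cube (n : Fin 3 → ℤ) : Set E3 :=
  ((MeasurableEquiv.toLp 2 (Fin 3 → ℝ)).symm) ⁻¹' (Set.univ.pi fun i => Set.Ico ((n i : ℝ)) (n i + 1))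

lemma cube_mem_iff {n : Fin 3 → ℤ} {x : E3} : x ∈ cube n ↔ ∀ i, (n i : ℝ) ≤ x i ∧ x i < n i + 1 := by
  simp [cube, Set.mem_pi, Set.mem_Ico]

lemma cube_measurable (n : Fin 3 → ℤ) : MeasurableSet (cube n) :=
  ((MeasurableEquiv.toLp 2 (Fin 3 → ℝ)).symm).measurable
    (MeasurableSet.univ_pi fun i => measurableSet_Ico)

lemma cube_volume (n : Fin 3 → ℤ) : volume (cube n) = 1 := by
  rw [cube, (EuclideanSpace.volume_preserving_symm_measurableEquiv_toLp (Fin 3)).measure_preimage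
    ((MeasurableSet.univ_pi fun i => measurableSet_Ico).nullMeasurableSet)]
  rw [volume_pi_pi]
  simp [Real.volume_Ico]

lemma cube_disjoint {n m : Fin 3 → ℤ} (h : n ≠ m) : Disjoint (cube n) (cube m) := by
  rw [Set.disjoint_left]
  intro x hn hm
  apply h
  funext i
  rw [cube_mem_iff] at hn hm
  have h1 := hn i; have h2 := hm i
  have b1 : (n i : ℝ) < m i + 1 := lt_of_le_of_lt h1.1 h2.2
  have b2 : (m i : ℝ) < n i + 1 := lt_of_le_of_lt h2.1 h1.2
  have a1 : n i < m i + 1 := by exact_mod_cast b1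
  have a2 : m i < n i + 1 := by exact_mod_cast b2
  omega

lemma card_le_volume (S : Finset (Fin 3 → ℤ)) (V : Set E3) (h : ∀ n ∈ S, cube n ⊆ V) :
    (S.card : ℝ≥0∞) ≤ volume V := by
  have hd : (↑S : Set (Fin 3 → ℤ)).PairwiseDisjoint cube := by
    intro a _ b _ hab; exact cube_disjoint hab
  have := measure_biUnion_finset hd (fun n _ => cube_measurable n) (μ := volume)
  calc (S.card : ℝ≥0∞) = ∑ n ∈ S, volume (cube n) := by simp [cube_volume]
    _ = volume (⋃ n ∈ S, cube n) := this.symm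
    _ ≤ volume V := measure_mono (Set.iUnion₂_subset h)

-- volume of 2D euclidean ball
lemma ball2_volume (r : ℝ) (hr : 0 ≤ r) :
    volume (Metric.ball (0 : E2) r) = ENNReal.ofReal (r^2 * π) := by
  rw [EuclideanSpace.volume_ball]
  have h1 : Real.Gamma ((Fintype.card (Fin 2)) / 2 + 1) = 1 := by
    norm_num [Real.Gamma_two]
  rw [h1]
  simp only [Fintype.card_fin]
  rw [Real.sq_sqrt Real.pi_pos.le]
  rw [← ENNReal.ofReal_pow hr, ← ENNReal.ofReal_mul (by positivity)]
  norm_num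

lemma annulus_area (A B : ℝ) :
    volume {w : Fin 2 → ℝ | A ≤ w 0^2 + w 1^2 ∧ w 0^2 + w 1^2 < B} ≤
      ENNReal.ofReal (π * (B - max A 0)) := by
  set A' := max A 0 with hA'
  have hA'0 : 0 ≤ A' := le_max_right _ _
  by_cases hBA : B ≤ A'
  · have : {w : Fin 2 → ℝ | A ≤ w 0^2 + w 1^2 ∧ w 0^2 + w 1^2 < B} = ∅ := by
      ext w; simp only [Set.mem_setOf_eq, Set.mem_empty_iff_false, iff_false, not_and]
      intro h1
      have h2 : 0 ≤ w 0^2 + w 1^2 := by positivity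
      intro h3
      have h4 : A' ≤ w 0 ^2 + w 1^2 := max_le h1 h2
      linarith
    rw [this]; simp
  push_neg at hBA
  have hB0 : 0 < B := lt_of_le_of_lt hA'0 hBA
  -- transfer to E2
  have hmp := (EuclideanSpace.volume_preserving_symm_measurableEquiv_toLp (Fin 2))
  set D : Set E2 := {x : E2 | A ≤ x 0^2 + x 1^2 ∧ x 0^2 + x 1^2 < B} with hD
  have hset : ((MeasurableEquiv.toLp 2 (Fin 2 → ℝ)).symm) ⁻¹'
      {w : Fin 2 → ℝ | A ≤ w 0^2 + w 1^2 ∧ w 0^2 + w 1^2 < B} = D := by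
    rfl
  have hmeas : MeasurableSet {w : Fin 2 → ℝ | A ≤ w 0^2 + w 1^2 ∧ w 0^2 + w 1^2 < B} := by
    apply MeasurableSet.inter
    · exact measurableSet_le measurable_const
        (((measurable_pi_apply 0).pow_const 2).add ((measurable_pi_apply 1).pow_const 2))
    · exact measurableSet_lt
        (((measurable_pi_apply 0).pow_const 2).add ((measurable_pi_apply 1).pow_const 2))
        measurable_const
  have hvol : volume {w : Fin 2 → ℝ | A ≤ w 0^2 + w 1^2 ∧ w 0^2 + w 1^2 < B} = volume D := by
    rw [← hset]
    exact (hmp.measure_preimage hmeas.nullMeasurableSet).symm ▸ rfl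
  rw [hvol]
  have hnorm : ∀ x : E2, ‖x‖^2 = x 0^2 + x 1^2 := by
    intro x
    rw [EuclideanSpace.norm_eq, Real.sq_sqrt (by positivity)]
    simp [Fin.sum_univ_two, sq_abs]
  have hsub : D ⊆ Metric.ball 0 (Real.sqrt B) \ Metric.ball 0 (Real.sqrt A') := by
    intro x hx
    obtain ⟨h1, h2⟩ := hx
    constructor
    · rw [Metric.mem_ball, dist_zero_right]
      apply lt_of_pow_lt_pow_left₀ 2 (Real.sqrt_nonneg B)
      rw [Real.sq_sqrt hB0.le, hnorm]
      exact h2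
    · rw [Metric.mem_ball, dist_zero_right, not_lt]
      have hA'x : A' ≤ ‖x‖^2 := by rw [hnorm]; exact max_le h1 (by positivity)
      calc Real.sqrt A' ≤ Real.sqrt (‖x‖^2) := Real.sqrt_le_sqrt hA'x
        _ = ‖x‖ := Real.sqrt_sq (norm_nonneg x)
  have hfin : volume (Metric.ball (0:E2) (Real.sqrt A')) ≠ ⊤ := by
    rw [ball2_volume _ (Real.sqrt_nonneg A')]
    exact ENNReal.ofReal_ne_top
  have hsubball : Metric.ball (0:E2) (Real.sqrt A') ⊆ Metric.ball 0 (Real.sqrt B) :=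
    Metric.ball_subset_ball (Real.sqrt_le_sqrt (le_of_lt hBA))
  calc volume D ≤ volume (Metric.ball (0:E2) (Real.sqrt B) \ Metric.ball 0 (Real.sqrt A')) :=
        measure_mono hsub
    _ = volume (Metric.ball (0:E2) (Real.sqrt B)) - volume (Metric.ball (0:E2) (Real.sqrt A')) :=
        measure_diff hsubball measurableSet_ball.nullMeasurableSet hfin
    _ = ENNReal.ofReal (B * π) - ENNReal.ofReal (A' * π) := by
        rw [ball2_volume _ (Real.sqrt_nonneg B), ball2_volume _ (Real.sqrt_nonneg A'),
          Real.sq_sqrt hB0.le, Real.sq_sqrt hA'0]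
    _ = ENNReal.ofReal (B * π - A' * π) := by
        rw [ENNReal.ofReal_sub _ (by positivity)]
    _ = ENNReal.ofReal (π * (B - A')) := by ring_nf

open scoped RealInnerProductSpace

lemma normE3_sq (y : E3) : ‖y‖^2 = y 0^2 + (y 1^2 + y 2^2) := by
  rw [EuclideanSpace.norm_eq, Real.sq_sqrt (by positivity)]
  simp [Fin.sum_univ_three, sq_abs]
  ring

lemma inner_e1 (y : E3) : ⟪y, EuclideanSpace.single (0:Fin 3) (1:ℝ)⟫ = y 0 := by
  rw [EuclideanSpace.inner_single_right]
  simp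

lemma hatbox (u : E3) (hu : ‖u‖ = 1) (q α β : ℝ) (hq : 0 ≤ q) :
    volume {x : E3 | (q ≤ ‖x‖ ∧ ‖x‖ < q + 1) ∧ α ≤ ⟪x, u⟫ ∧ ⟪x, u⟫ ≤ β}
      ≤ ENNReal.ofReal ((2*q+1) * π * (β - α)) := by
  set e1 : E3 := EuclideanSpace.single (0:Fin 3) (1:ℝ) with he1def
  have he1 : ‖e1‖ = 1 := by rw [he1def, EuclideanSpace.norm_single]; norm_num
  set T := Submodule.reflection (ℝ ∙ (u - e1))ᗮ with hTdef
  have hT : T u = e1 := Submodule.reflection_sub (hu.trans he1.symm)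
  set S' : Set E3 := {y : E3 | (q ≤ ‖y‖ ∧ ‖y‖ < q + 1) ∧ α ≤ ⟪y, e1⟫ ∧ ⟪y, e1⟫ ≤ β} with hS'def
  have hS'meas : MeasurableSet S' := by
    apply MeasurableSet.inter
    · exact (measurableSet_le measurable_const continuous_norm.measurable).inter
        (measurableSet_lt continuous_norm.measurable measurable_const)
    · have hcont : Continuous fun y : E3 => ⟪y, e1⟫ := continuous_id.inner continuous_const
      exact (measurableSet_le measurable_const hcont.measurable).inter
        (measurableSet_le hcont.measurable measurable_const)
  have hpre : {x : E3 | (q ≤ ‖x‖ ∧ ‖x‖ < q + 1) ∧ α ≤ ⟪x, u⟫ ∧ ⟪x, u⟫ ≤ β} = T ⁻¹' S' := by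
    ext x
    simp only [Set.mem_preimage, hS'def, Set.mem_setOf_eq]
    rw [T.norm_map, ← hT, T.inner_map_map]
  rw [hpre, (T.measurePreserving).measure_preimage hS'meas.nullMeasurableSet]
  -- move to pi space
  set P : Set (Fin 3 → ℝ) := {y | (q^2 ≤ y 0^2 + (y 1^2 + y 2^2) ∧ y 0^2 + (y 1^2 + y 2^2) < (q+1)^2)
      ∧ α ≤ y 0 ∧ y 0 ≤ β} with hPdef
  have hPmeas : MeasurableSet P := by
    apply MeasurableSet.inter
    · have hm : Measurable fun y : Fin 3 → ℝ => y 0^2 + (y 1^2 + y 2^2) :=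
        ((measurable_pi_apply 0).pow_const 2).add
          (((measurable_pi_apply 1).pow_const 2).add ((measurable_pi_apply 2).pow_const 2))
      exact (measurableSet_le measurable_const hm).inter (measurableSet_lt hm measurable_const)
    · exact (measurableSet_le measurable_const (measurable_pi_apply 0)).inter
        (measurableSet_le (measurable_pi_apply 0) measurable_const)
  have hSP : S' = ((MeasurableEquiv.toLp 2 (Fin 3 → ℝ)).symm) ⁻¹' P := by
    ext y
    simp only [Set.mem_preimage, hS'def, hPdef, Set.mem_setOf_eq]
    have h1 : ((MeasurableEquiv.toLp 2 (Fin 3 → ℝ)).symm) y = fun i => y i := rfl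
    rw [h1]
    have h2 : q ≤ ‖y‖ ↔ q^2 ≤ y 0^2 + (y 1^2 + y 2^2) := by
      rw [← normE3_sq]
      constructor
      · intro h; exact pow_le_pow_left₀ hq h 2
      · intro h
        have := Real.sqrt_le_sqrt h
        rwa [Real.sqrt_sq hq, Real.sqrt_sq (norm_nonneg y)] at this
    have h3 : ‖y‖ < q + 1 ↔ y 0^2 + (y 1^2 + y 2^2) < (q+1)^2 := by
      rw [← normE3_sq]
      constructor
      · intro h; nlinarith [norm_nonneg y]
      · intro h; nlinarith [norm_nonneg y]
    rw [h2, h3, he1def, inner_e1]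
  rw [hSP, (EuclideanSpace.volume_preserving_symm_measurableEquiv_toLp (Fin 3)).measure_preimage
    hPmeas.nullMeasurableSet]
  -- split off coordinate 0
  set P2 : Set (ℝ × (Fin 2 → ℝ)) := {z | (q^2 ≤ z.1^2 + (z.2 0^2 + z.2 1^2)
      ∧ z.1^2 + (z.2 0^2 + z.2 1^2) < (q+1)^2) ∧ α ≤ z.1 ∧ z.1 ≤ β} with hP2def
  have hP2meas : MeasurableSet P2 := by
    have hm : Measurable fun z : ℝ × (Fin 2 → ℝ) => z.1^2 + (z.2 0^2 + z.2 1^2) :=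
      (measurable_fst.pow_const 2).add
        ((((measurable_pi_apply 0).comp measurable_snd).pow_const 2).add
          (((measurable_pi_apply 1).comp measurable_snd).pow_const 2))
    exact ((measurableSet_le measurable_const hm).inter (measurableSet_lt hm measurable_const)).inter
      ((measurableSet_le measurable_const measurable_fst).inter
        (measurableSet_le measurable_fst measurable_const))
  have hPP2 : P = (MeasurableEquiv.piFinSuccAbove (fun _ : Fin 3 => ℝ) 0) ⁻¹' P2 := by
    ext y
    simp only [Set.mem_preimage, hPdef, hP2def, Set.mem_setOf_eq,
      MeasurableEquiv.piFinSuccAbove_apply, Fin.removeNth, Fin.succAbove_zero]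
    rfl
  rw [hPP2, (volume_preserving_piFinSuccAbove (fun _ : Fin 3 => ℝ) 0).measure_preimage
    hP2meas.nullMeasurableSet]
  rw [show (volume : Measure (ℝ × (Fin 2 → ℝ))) = (volume : Measure ℝ).prod volume from rfl]
  rw [Measure.prod_apply hP2meas]
  have hslice : ∀ t : ℝ, volume (Prod.mk t ⁻¹' P2) ≤
      (Set.Icc α β).indicator (fun _ => ENNReal.ofReal (π * (2*q+1))) t := by
    intro t
    by_cases ht : t ∈ Set.Icc α β
    · rw [Set.indicator_of_mem ht]
      have hsub2 : Prod.mk t ⁻¹' P2 ⊆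
          {w : Fin 2 → ℝ | q^2 - t^2 ≤ w 0^2 + w 1^2 ∧ w 0^2 + w 1^2 < (q+1)^2 - t^2} := by
        intro w hw
        obtain ⟨⟨hw1, hw2⟩, _⟩ := hw
        constructor <;> [linarith; linarith]
      calc volume (Prod.mk t ⁻¹' P2)
          ≤ volume {w : Fin 2 → ℝ | q^2 - t^2 ≤ w 0^2 + w 1^2 ∧ w 0^2 + w 1^2 < (q+1)^2 - t^2} :=
            measure_mono hsub2
        _ ≤ ENNReal.ofReal (π * ((q+1)^2 - t^2 - max (q^2 - t^2) 0)) :=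
            annulus_area (q^2 - t^2) ((q+1)^2 - t^2)
        _ ≤ ENNReal.ofReal (π * (2*q+1)) := by
            apply ENNReal.ofReal_le_ofReal
            rcases le_total (q^2 - t^2) 0 with h | h
            · rw [max_eq_right h]; nlinarith [Real.pi_pos]
            · rw [max_eq_left h]; nlinarith [Real.pi_pos]
    · have : Prod.mk t ⁻¹' P2 = ∅ := by
        ext w
        simp only [Set.mem_preimage, hP2def, Set.mem_setOf_eq, Set.mem_empty_iff_false, iff_false]
        rw [Set.mem_Icc] at ht
        tauto
      rw [this, Set.indicator_of_notMem ht]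
      simp
  calc ∫⁻ t, volume (Prod.mk t ⁻¹' P2) ≤
      ∫⁻ t, (Set.Icc α β).indicator (fun _ => ENNReal.ofReal (π * (2*q+1))) t :=
        lintegral_mono hslice
    _ = ENNReal.ofReal (π * (2*q+1)) * volume (Set.Icc α β) := by
        rw [lintegral_indicator measurableSet_Icc]
        simp [Measure.restrict_apply]
    _ = ENNReal.ofReal (π * (2*q+1)) * ENNReal.ofReal (β - α) := by rw [Real.volume_Icc]
    _ ≤ ENNReal.ofReal ((2*q+1) * π * (β - α)) := by
        rw [← ENNReal.ofReal_mul (by positivity)]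
        apply ENNReal.ofReal_le_ofReal
        nlinarith [Real.pi_pos]


lemma japR_sq (x : E3) : (japR x)^2 = 1 + ‖x‖^2 := Real.sq_sqrt (by positivity)

lemma IsSign.abs' {e : ℝ} (h : IsSign e) : |e| = 1 := by
  rcases h with h | h <;> rw [h] <;> norm_num

lemma IsSign.mul {e f : ℝ} (h : IsSign e) (h' : IsSign f) : IsSign (e * f) := by
  rcases h with h | h <;> rcases h' with h' | h' <;> rw [h, h'] <;> [left; right; right; left] <;> norm_num

lemma one_le_jap (n : Fin 3 → ℤ) : 1 ≤ jap n := by rw [jap_eq_japR]; exact one_le_japR _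

lemma norm_le_two_of_coords (y : E3) (h : ∀ i, |y i| ≤ 1) : ‖y‖ ≤ 2 := by
  rw [EuclideanSpace.norm_eq]
  have h3 : ∑ i, ‖y i‖^2 ≤ 3 := by
    rw [Fin.sum_univ_three]
    have := h 0; have := h 1; have := h 2
    simp only [Real.norm_eq_abs]
    nlinarith [abs_nonneg (y 0), abs_nonneg (y 1), abs_nonneg (y 2)]
  calc Real.sqrt (∑ i, ‖y i‖^2) ≤ Real.sqrt 4 := Real.sqrt_le_sqrt (by linarith)
    _ = 2 := by rw [show (4:ℝ) = 2^2 by norm_num, Real.sqrt_sq (by norm_num)]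

set_option maxHeartbeats 2000000 in
/-- The key single-variable counting lemma. -/
lemma key_count (ε' : ℝ) (hε : IsSign ε') (a : Fin 3 → ℤ) (c N : ℝ) (hN : 1 ≤ N) :
    (({n : Fin 3 → ℤ | jap n ≤ 2*N ∧ |jap (n + a) + ε' * jap n - c| ≤ 1}).ncard : ℝ)
      ≤ 1000000 * (N^3 / min N (jap a)) := by
  have hN0 : (0:ℝ) < N := by linarith
  have hja : 1 ≤ jap a := one_le_jap a
  have hmin0 : 0 < min N (jap a) := lt_min (by linarith) (by linarith)
  set S : Set (Fin 3 → ℤ) := {n | jap n ≤ 2*N ∧ |jap (n + a) + ε' * jap n - c| ≤ 1} with hSdef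
  have hsub : S ⊆ ↑(box (2*N)) := fun n hn => mem_box hn.1
  have hfin : S.Finite := Set.Finite.subset (box (2*N)).finite_toSet hsub
  have hcard : (S.ncard : ℝ) = (hfin.toFinset.card : ℝ) := by
    rw [Set.ncard_eq_toFinset_card _ hfin]
  by_cases hsmall : jap a ≤ 100
  · have h1 : hfin.toFinset ⊆ box (2*N) := by
      intro n hn; exact mem_box ((hfin.mem_toFinset.mp hn).1)
    have h2 : (hfin.toFinset.card : ℝ) ≤ 27 * (2*N)^3 := by
      calc (hfin.toFinset.card : ℝ) ≤ ((box (2*N)).card : ℝ) := by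
            exact_mod_cast Finset.card_le_card h1
        _ ≤ 27 * (2*N)^3 := box_card (by linarith)
    have h3 : min N (jap a) ≤ 100 := le_trans (min_le_right _ _) hsmall
    have h4 : N^3/100 ≤ N^3 / min N (jap a) :=
      div_le_div_of_nonneg_left (by positivity) hmin0 h3
    rw [hcard]
    nlinarith [pow_pos hN0 3]
  · push_neg at hsmall
    set d : ℝ := ‖emb a‖ with hddef
    have hd2 : d^2 = (jap a)^2 - 1 := by rw [jap_eq_japR, japR_sq]; ring
    have hd0 : (0:ℝ) ≤ d := norm_nonneg _
    have hd99 : 99 ≤ d := by nlinarith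
    have hd0' : (0:ℝ) < d := by linarith
    have hdja : 99 * jap a ≤ 100 * d := by nlinarith
    set R : ℝ := 2*N + 4 with hRdef
    have hR0 : (0:ℝ) < R := by linarith
    set V : Set E3 := {x : E3 | ‖x‖ ≤ R ∧ |japR (x + emb a) + ε' * japR x - c| ≤ 5} with hVdef
    -- Step A : count ≤ volume V
    have hcube : ∀ n ∈ hfin.toFinset, cube n ⊆ V := by
      intro n hn x hx
      obtain ⟨hn1, hn2⟩ := hfin.mem_toFinset.mp hn
      have hx2 : ‖x - emb n‖ ≤ 2 := by
        apply norm_le_two_of_coords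
        intro i
        have hi := (cube_mem_iff.mp hx) i
        have : (x - emb n) i = x i - (n i : ℝ) := by
          rw [PiLp.sub_apply]; rfl
        rw [this, abs_le]
        constructor <;> [linarith [hi.1]; linarith [hi.2]]
      constructor
      · have h5 : ‖x‖ ≤ ‖emb n‖ + ‖x - emb n‖ := by
          calc ‖x‖ = ‖emb n + (x - emb n)‖ := by rw [add_sub_cancel]
            _ ≤ _ := norm_add_le _ _
        have h6 : ‖emb n‖ ≤ jap n := by rw [jap_eq_japR]; exact norm_le_japR _
        rw [hRdef]; linarith
      · have e1 : |japR (x + emb a) - jap (n + a)| ≤ 2 := by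
          rw [jap_eq_japR, emb_add]
          calc |japR (x + emb a) - japR (emb n + emb a)| ≤ ‖(x + emb a) - (emb n + emb a)‖ :=
                abs_japR_sub _ _
            _ = ‖x - emb n‖ := by rw [add_sub_add_right_eq_sub]
            _ ≤ 2 := hx2
        have e2 : |japR x - jap n| ≤ 2 := by
          rw [jap_eq_japR]
          exact le_trans (abs_japR_sub _ _) hx2
        have heq : japR (x + emb a) + ε' * japR x - c =
            (jap (n + a) + ε' * jap n - c) + ((japR (x + emb a) - jap (n + a))
              + ε' * (japR x - jap n)) := by ring
        rw [heq]
        have h7 : |ε' * (japR x - jap n)| ≤ 2 := by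
          rw [abs_mul, hε.abs', one_mul]; exact e2
        calc |_ + _| ≤ |jap (n + a) + ε' * jap n - c| +
              |(japR (x + emb a) - jap (n + a)) + ε' * (japR x - jap n)| := abs_add_le _ _
          _ ≤ 1 + (|japR (x + emb a) - jap (n + a)| + |ε' * (japR x - jap n)|) := by
              have := abs_add_le (japR (x + emb a) - jap (n + a)) (ε' * (japR x - jap n))
              linarith [hn2]
          _ ≤ 5 := by linarith
    have hA : (hfin.toFinset.card : ℝ≥0∞) ≤ volume V :=
      card_le_volume _ _ hcube
    -- covering family
    set W : ℤ × ℤ → Set E3 := fun z => {x : E3 | (((z.1:ℝ) ≤ ‖x‖ ∧ ‖x‖ < (z.1:ℝ)+1) ∧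
        ((z.2:ℝ) ≤ ‖x + emb a‖ ∧ ‖x + emb a‖ < (z.2:ℝ)+1))} with hWdef
    set F : Finset (ℤ × ℤ) := (Finset.Icc 0 ⌊R⌋ ×ˢ Finset.Icc 0 ⌊R + d⌋).filter
        (fun z => |(z.2:ℝ) + ε' * (z.1:ℝ) - c| ≤ 9) with hFdef
    have hVsub : V ⊆ ⋃ z ∈ F, W z := by
      intro x hx
      obtain ⟨hx1, hx2⟩ := hx
      have hxa : ‖x + emb a‖ ≤ R + d := by
        calc ‖x + emb a‖ ≤ ‖x‖ + ‖emb a‖ := norm_add_le _ _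
          _ ≤ R + d := by rw [← hddef]; linarith
      have hj1 : ‖x‖ ≤ japR x := norm_le_japR x
      have hj2 : japR x ≤ ‖x‖ + 1 := japR_le x
      have hj3 : ‖x + emb a‖ ≤ japR (x + emb a) := norm_le_japR _
      have hj4 : japR (x + emb a) ≤ ‖x + emb a‖ + 1 := japR_le _
      have hfl1 : ((⌊‖x‖⌋ : ℤ) : ℝ) ≤ ‖x‖ := Int.floor_le _
      have hfl2 : ‖x‖ < ((⌊‖x‖⌋ : ℤ) : ℝ) + 1 := Int.lt_floor_add_one _
      have hfl3 : ((⌊‖x + emb a‖⌋ : ℤ) : ℝ) ≤ ‖x + emb a‖ := Int.floor_le _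
      have hfl4 : ‖x + emb a‖ < ((⌊‖x + emb a‖⌋ : ℤ) : ℝ) + 1 := Int.lt_floor_add_one _
      refine Set.mem_biUnion (show (⟨⌊‖x‖⌋, ⌊‖x + emb a‖⌋⟩ : ℤ × ℤ) ∈ F from ?_) ?_
      · rw [hFdef, Finset.mem_filter, Finset.mem_product, Finset.mem_Icc, Finset.mem_Icc]
        refine ⟨⟨⟨Int.floor_nonneg.mpr (norm_nonneg x), Int.floor_le_floor hx1⟩,
          Int.floor_nonneg.mpr (norm_nonneg _), Int.floor_le_floor hxa⟩, ?_⟩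
        have e1 : |((⌊‖x + emb a‖⌋ : ℤ) : ℝ) - japR (x + emb a)| ≤ 2 := by
          rw [abs_le]; constructor <;> linarith
        have e2 : |((⌊‖x‖⌋ : ℤ) : ℝ) - japR x| ≤ 2 := by
          rw [abs_le]; constructor <;> linarith
      -- cleanup of the 9-bound
        have h7 : |ε' * (((⌊‖x‖⌋ : ℤ) : ℝ) - japR x)| ≤ 2 := by
          rw [abs_mul, hε.abs', one_mul]; exact e2
        have heq : ((⌊‖x + emb a‖⌋ : ℤ) : ℝ) + ε' * ((⌊‖x‖⌋ : ℤ) : ℝ) - c =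
            (japR (x + emb a) + ε' * japR x - c) + ((((⌊‖x + emb a‖⌋ : ℤ) : ℝ) - japR (x + emb a))
              + ε' * (((⌊‖x‖⌋ : ℤ) : ℝ) - japR x)) := by ring
        rw [heq]
        calc |_ + _| ≤ |japR (x + emb a) + ε' * japR x - c| +
              |(((⌊‖x + emb a‖⌋ : ℤ) : ℝ) - japR (x + emb a)) +
                ε' * (((⌊‖x‖⌋ : ℤ) : ℝ) - japR x)| := abs_add_le _ _
          _ ≤ 5 + (|((⌊‖x + emb a‖⌋ : ℤ) : ℝ) - japR (x + emb a)| +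
                |ε' * (((⌊‖x‖⌋ : ℤ) : ℝ) - japR x)|) := by
              have := abs_add_le (((⌊‖x + emb a‖⌋ : ℤ) : ℝ) - japR (x + emb a))
                (ε' * (((⌊‖x‖⌋ : ℤ) : ℝ) - japR x))
              linarith
          _ ≤ 9 := by linarith
      · rw [hWdef]
        exact ⟨⟨hfl1, hfl2⟩, ⟨hfl3, hfl4⟩⟩
    -- volume of an individual W z
    have hWvol : ∀ z ∈ F, volume (W z) ≤
        ENNReal.ofReal ((2*R+1) * π * ((2*R + d + 1)/d)) := by
      intro z hz
      rw [hFdef, Finset.mem_filter, Finset.mem_product, Finset.mem_Icc, Finset.mem_Icc] at hz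
      obtain ⟨⟨⟨hz10, hz1R⟩, hz20, hz2R⟩, _⟩ := hz
      have hz1R' : ((z.1 : ℤ) : ℝ) ≤ R := le_trans (by exact_mod_cast hz1R) (Int.floor_le R)
      have hz2R' : ((z.2 : ℤ) : ℝ) ≤ R + d := le_trans (by exact_mod_cast hz2R) (Int.floor_le _)
      have hz10' : (0:ℝ) ≤ ((z.1 : ℤ) : ℝ) := by exact_mod_cast hz10
      have hz20' : (0:ℝ) ≤ ((z.2 : ℤ) : ℝ) := by exact_mod_cast hz20
      set u : E3 := d⁻¹ • emb a with hudef
      have hu : ‖u‖ = 1 := by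
        rw [hudef, norm_smul, ← hddef, norm_inv, Real.norm_eq_abs, abs_of_pos hd0']
        field_simp
      set α : ℝ := (((z.2:ℝ))^2 - ((z.1:ℝ)+1)^2 - d^2)/(2*d) with hαdef
      set β : ℝ := (((z.2:ℝ)+1)^2 - ((z.1:ℝ))^2 - d^2)/(2*d) with hβdef
      have hWsub : W z ⊆ {x : E3 | (((z.1:ℝ)) ≤ ‖x‖ ∧ ‖x‖ < (z.1:ℝ) + 1) ∧
          α ≤ ⟪x, u⟫ ∧ ⟪x, u⟫ ≤ β} := by
        intro x hx
        rw [hWdef] at hx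
        obtain ⟨⟨hxa1, hxa2⟩, hxb1, hxb2⟩ := hx
        have hinner : ⟪x, u⟫ = (‖x + emb a‖^2 - ‖x‖^2 - d^2)/(2*d) := by
          rw [hudef, real_inner_smul_right]
          have hexp : ‖x + emb a‖^2 = ‖x‖^2 + 2*⟪x, emb a⟫ + ‖emb a‖^2 :=
            norm_add_sq_real x (emb a)
          rw [← hddef] at hexp
          have h8 : ⟪x, emb a⟫ = (‖x + emb a‖^2 - ‖x‖^2 - d^2)/2 := by linarith
          rw [h8, inv_mul_eq_div, div_div]
        refine ⟨⟨hxa1, hxa2⟩, ?_, ?_⟩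
        · rw [hinner, hαdef, div_le_div_iff_of_pos_right (by linarith : (0:ℝ) < 2*d)]
          have q1 : ((z.2:ℝ))^2 ≤ ‖x + emb a‖^2 := pow_le_pow_left₀ hz20' hxb1 2
          have q2 : ‖x‖^2 ≤ ((z.1:ℝ)+1)^2 := pow_le_pow_left₀ (norm_nonneg x) hxa2.le 2
          linarith
        · rw [hinner, hβdef, div_le_div_iff_of_pos_right (by linarith : (0:ℝ) < 2*d)]
          have q1 : ‖x + emb a‖^2 ≤ ((z.2:ℝ)+1)^2 := pow_le_pow_left₀ (norm_nonneg _) hxb2.le 2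
          have q2 : ((z.1:ℝ))^2 ≤ ‖x‖^2 := pow_le_pow_left₀ hz10' hxa1 2
          linarith
      have hba : β - α = ((z.1:ℝ) + (z.2:ℝ) + 1)/d := by
        rw [hαdef, hβdef]; field_simp; ring
      calc volume (W z) ≤ volume {x : E3 | (((z.1:ℝ)) ≤ ‖x‖ ∧ ‖x‖ < (z.1:ℝ) + 1) ∧
            α ≤ ⟪x, u⟫ ∧ ⟪x, u⟫ ≤ β} := measure_mono hWsub
        _ ≤ ENNReal.ofReal ((2*(z.1:ℝ)+1) * π * (β - α)) := hatbox u hu _ α β hz10'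
        _ ≤ ENNReal.ofReal ((2*R+1) * π * ((2*R + d + 1)/d)) := by
            apply ENNReal.ofReal_le_ofReal
            rw [hba]
            have hd1 : ((z.1:ℝ) + (z.2:ℝ) + 1)/d ≤ (2*R + d + 1)/d :=
              (div_le_div_iff_of_pos_right hd0').mpr (by linarith)
            have hq1 : 2*(z.1:ℝ)+1 ≤ 2*R+1 := by linarith
            have h0a : (0:ℝ) ≤ 2*(z.1:ℝ)+1 := by linarith
            have h0b : (0:ℝ) ≤ ((z.1:ℝ) + (z.2:ℝ) + 1)/d := by positivity
            nlinarith [Real.pi_pos,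
              mul_le_mul hq1 hd1 h0b (by linarith : (0:ℝ) ≤ 2*R+1)]
    -- cardinality of F
    have hFcard : (F.card : ℝ) ≤ 19 * (R + 1) := by
      have hmaps : ∀ z ∈ F, Prod.fst z ∈ Finset.Icc 0 ⌊R⌋ := by
        intro z hz
        rw [hFdef, Finset.mem_filter, Finset.mem_product] at hz
        exact hz.1.1
      have hfib : ∀ k ∈ Finset.Icc 0 ⌊R⌋, (F.filter fun z => Prod.fst z = k).card ≤ 19 := by
        intro k _
        have hinj : Set.InjOn Prod.snd (↑(F.filter fun z => Prod.fst z = k) : Set (ℤ × ℤ)) := by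
          intro z hz w hw hzw
          simp only [Finset.coe_filter, Set.mem_setOf_eq] at hz hw
          exact Prod.ext (hz.2.trans hw.2.symm) hzw
        have hsubI : ∀ z ∈ F.filter (fun z => Prod.fst z = k), Prod.snd z ∈
            Finset.Icc ⌈c - ε' * (k:ℝ) - 9⌉ ⌊c - ε' * (k:ℝ) + 9⌋ := by
          intro z hz
          rw [Finset.mem_filter] at hz
          obtain ⟨hzF, hzk⟩ := hz
          rw [hFdef, Finset.mem_filter] at hzF
          have h9 := hzF.2
          rw [hzk] at h9
          rw [abs_le] at h9
          rw [Finset.mem_Icc]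
          constructor
          · rw [Int.ceil_le]; linarith [h9.1]
          · rw [Int.le_floor]; linarith [h9.2]
        have hcard19 : (Finset.Icc ⌈c - ε' * (k:ℝ) - 9⌉ ⌊c - ε' * (k:ℝ) + 9⌋).card ≤ 19 := by
          rw [Int.card_Icc]
          have hb1 : ((⌊c - ε' * (k:ℝ) + 9⌋ : ℤ) : ℝ) ≤ c - ε' * (k:ℝ) + 9 := Int.floor_le _
          have hb2 : c - ε' * (k:ℝ) - 9 ≤ ((⌈c - ε' * (k:ℝ) - 9⌉ : ℤ) : ℝ) := Int.le_ceil _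
          have hint : (⌊c - ε' * (k:ℝ) + 9⌋ : ℤ) - ⌈c - ε' * (k:ℝ) - 9⌉ ≤ 18 := by
            have : ((⌊c - ε' * (k:ℝ) + 9⌋ : ℤ) : ℝ) - ((⌈c - ε' * (k:ℝ) - 9⌉ : ℤ) : ℝ) ≤ 18 := by
              linarith
            exact_mod_cast this
          omega
        calc (F.filter fun z => Prod.fst z = k).card
            ≤ (Finset.Icc ⌈c - ε' * (k:ℝ) - 9⌉ ⌊c - ε' * (k:ℝ) + 9⌋).card :=
              Finset.card_le_card_of_injOn Prod.snd hsubI hinj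
          _ ≤ 19 := hcard19
      have hcount : F.card ≤ 19 * (Finset.Icc 0 ⌊R⌋).card :=
        Finset.card_le_mul_card_image_of_maps_to hmaps 19 hfib
      have hIccR : ((Finset.Icc (0:ℤ) ⌊R⌋).card : ℝ) ≤ R + 1 := by
        rw [Int.card_Icc]
        have h1 : (0:ℤ) ≤ ⌊R⌋ := Int.floor_nonneg.mpr hR0.le
        have h2 : ((⌊R⌋ : ℤ) : ℝ) ≤ R := Int.floor_le R
        have h3 : ((⌊R⌋ + 1 - 0).toNat : ℤ) = ⌊R⌋ + 1 := by omega
        have h4 : (((⌊R⌋ + 1 - 0).toNat : ℤ) : ℝ) ≤ R + 1 := by rw [h3]; push_cast; linarith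
        exact_mod_cast h4
      have hc2 : (F.card : ℝ) ≤ 19 * ((Finset.Icc (0:ℤ) ⌊R⌋).card : ℝ) := by
        exact_mod_cast hcount
      linarith
    -- total volume bound
    have hM0 : (0:ℝ) ≤ (2*R+1) * π * ((2*R + d + 1)/d) := by positivity
    have hBtot : volume V ≤ ENNReal.ofReal (19*(R+1) * ((2*R+1) * π * ((2*R + d + 1)/d))) := by
      calc volume V ≤ volume (⋃ z ∈ F, W z) := measure_mono hVsub
        _ ≤ ∑ z ∈ F, volume (W z) := measure_biUnion_finset_le F W
        _ ≤ ∑ _z ∈ F, ENNReal.ofReal ((2*R+1) * π * ((2*R + d + 1)/d)) := Finset.sum_le_sum hWvol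
        _ = (F.card : ℝ≥0∞) * ENNReal.ofReal ((2*R+1) * π * ((2*R + d + 1)/d)) := by
            rw [Finset.sum_const, nsmul_eq_mul]
        _ ≤ ENNReal.ofReal (19*(R+1)) * ENNReal.ofReal ((2*R+1) * π * ((2*R + d + 1)/d)) := by
            apply mul_le_mul_left
            rw [← ENNReal.ofReal_natCast]
            exact ENNReal.ofReal_le_ofReal hFcard
        _ = ENNReal.ofReal (19*(R+1) * ((2*R+1) * π * ((2*R + d + 1)/d))) :=
            (ENNReal.ofReal_mul (by positivity)).symm
    have hbig0 : (0:ℝ) ≤ 19*(R+1) * ((2*R+1) * π * ((2*R + d + 1)/d)) := by positivity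
    have hC : (hfin.toFinset.card : ℝ) ≤ 19*(R+1) * ((2*R+1) * π * ((2*R + d + 1)/d)) := by
      have h := le_trans hA hBtot
      rw [← ENNReal.ofReal_natCast] at h
      exact (ENNReal.ofReal_le_ofReal_iff hbig0).mp h
    rw [hcard]
    refine le_trans hC ?_
    -- final real arithmetic
    have hmN : min N (jap a) ≤ N := min_le_left _ _
    have hmj : min N (jap a) ≤ jap a := min_le_right _ _
    have hsplit : 19*(R+1) * ((2*R+1) * π * ((2*R + d + 1)/d)) =
        (19*(R+1) * ((2*R+1) * π * (2*R + d + 1)))/d := by field_simp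
    have hsplit2 : (1000000:ℝ) * (N^3 / min N (jap a)) = (1000000 * N^3)/(min N (jap a)) := by
      ring
    rw [hsplit, hsplit2, div_le_div_iff₀ hd0' hmin0]
    have hπ4 : π ≤ 4 := by linarith [Real.pi_le_four]
    have hm0' : (0:ℝ) ≤ min N (jap a) := hmin0.le
    have hint1 : (4*N+9) * min N (jap a) ≤ 13*N*(min N (jap a)) := by nlinarith
    have hint2 : 99 * min N (jap a) ≤ 100 * d := by linarith
    have hint3 : 13*N*(99*(min N (jap a))) ≤ 13*N*(100*d) := by nlinarith
    have hint4 : d * min N (jap a) ≤ d * N := by nlinarith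
    have hNd : (0:ℝ) ≤ N * d := by positivity
    have hA3 : (2*R + d + 1) * min N (jap a) ≤ 15*N*d := by
      rw [hRdef]
      nlinarith
    have h5 : 19*(R+1)*((2*R+1)*(π*((2*R+d+1) * min N (jap a)))) ≤
        19*(7*N)*((13*N)*(4*(15*N*d))) := by
      gcongr
      · rw [hRdef]; linarith
      · rw [hRdef]; linarith
    have heq : 19*(R+1) * ((2*R+1) * π * (2*R + d + 1)) * min N (jap a) =
        19*(R+1)*((2*R+1)*(π*((2*R+d+1) * min N (jap a)))) := by ring
    have ht : (0:ℝ) < N^3*d := by positivity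
    rw [heq]
    refine le_trans h5 ?_
    nlinarith [ht]


lemma jap_neg (n : Fin 3 → ℤ) : jap (-n) = jap n := by
  unfold jap
  congr 1
  apply congrArg
  apply Finset.sum_congr rfl
  intro i _
  have : (-n) i = -(n i) := rfl
  rw [this]
  push_cast
  ring

lemma key_count' (ε' : ℝ) (hε : IsSign ε') (a : Fin 3 → ℤ) (c N M : ℝ) (hN : 1 ≤ N)
    (hM0 : 0 < M) (hMa : M ≤ jap a) :
    (({n : Fin 3 → ℤ | jap n ≤ 2*N ∧ |jap (n + a) + ε' * jap n - c| ≤ 1}).ncard : ℝ)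
      ≤ 1000000 * (N^3 / min N M) := by
  refine le_trans (key_count ε' hε a c N hN) ?_
  have h1 : min N M ≤ min N (jap a) := min_le_min le_rfl hMa
  have h2 : 0 < min N M := lt_min (by linarith) hM0
  have h3 := div_le_div_of_nonneg_left (by positivity : (0:ℝ) ≤ N^3) h2 h1
  linarith

lemma sign_sq {e : ℝ} (h : IsSign e) : e * e = 1 := by
  rcases h with h | h <;> rw [h] <;> norm_num

set_option maxHeartbeats 2000000 in
/-- **Main cubic counting estimate, part (iv)**: counting in the variables `n₁₂, n₁, n₃`.
Here `p.1` plays the role of `n₁₂`, `p.2.1` that of `n₁`, and `p.2.2` that of `n₃`. -/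
theorem cubic_counting_iv :
    ∃ C : ℝ, 0 < C ∧
      ∀ ε₀ ε₁ ε₂ ε₃ : ℝ, IsSign ε₀ → IsSign ε₁ → IsSign ε₂ → IsSign ε₃ →
        ∀ N₁₂ N₁ N₃ : ℝ, 1 ≤ N₁₂ → 1 ≤ N₁ → 1 ≤ N₃ → ∀ m : ℤ,
          (({p : (Fin 3 → ℤ) × (Fin 3 → ℤ) × (Fin 3 → ℤ) |
              dy N₁₂ p.1 ∧ dy N₁ p.2.1 ∧ dy N₃ p.2.2 ∧
              |ε₀ * jap (p.1 + p.2.2) + ε₁ * jap p.2.1 + ε₂ * jap (p.1 - p.2.1) +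
                ε₃ * jap p.2.2 - (m : ℝ)| ≤ 1}).ncard : ℝ)
            ≤ C * (min N₁₂ (max N₁ N₃))⁻¹ * (N₁₂ * N₁ * N₃) ^ 3 := by
  refine ⟨46656000000, by norm_num, ?_⟩
  intro ε₀ ε₁ ε₂ ε₃ h0 h1 h2 h3 N₁₂ N₁ N₃ hN12 hN1 hN3 m
  set T : Set ((Fin 3 → ℤ) × (Fin 3 → ℤ) × (Fin 3 → ℤ)) := {p |
      dy N₁₂ p.1 ∧ dy N₁ p.2.1 ∧ dy N₃ p.2.2 ∧
      |ε₀ * jap (p.1 + p.2.2) + ε₁ * jap p.2.1 + ε₂ * jap (p.1 - p.2.1) +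
        ε₃ * jap p.2.2 - (m : ℝ)| ≤ 1} with hTdef
  have hTsub : T ⊆ ↑(box (2*N₁₂) ×ˢ box (2*N₁) ×ˢ box (2*N₃)) := by
    intro p hp
    obtain ⟨hp1, hp2, hp3, _⟩ := hp
    simp only [Finset.coe_product, Set.mem_prod]
    exact ⟨mem_box hp1.2, mem_box hp2.2, mem_box hp3.2⟩
  have hTfin : T.Finite := Set.Finite.subset (Finset.finite_toSet _) hTsub
  have hTcard : (T.ncard : ℝ) = (hTfin.toFinset.card : ℝ) := by
    rw [Set.ncard_eq_toFinset_card _ hTfin]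
  set t := hTfin.toFinset with htdef
  have hbox12 : ((box (2*N₁₂)).card : ℝ) ≤ 216 * N₁₂^3 := by
    have := box_card (B := 2*N₁₂) (by linarith)
    nlinarith [this]
  have hbox1 : ((box (2*N₁)).card : ℝ) ≤ 216 * N₁^3 := by
    have := box_card (B := 2*N₁) (by linarith)
    nlinarith [this]
  have hbox3 : ((box (2*N₃)).card : ℝ) ≤ 216 * N₃^3 := by
    have := box_card (B := 2*N₃) (by linarith)
    nlinarith [this]
  rcases le_total N₁ N₃ with hmax | hmax
  · -- case N₁ ≤ N₃ : count in the n₃ variable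
    have hmaxeq : max N₁ N₃ = N₃ := max_eq_right hmax
    rw [hmaxeq, hTcard]
    set f : ((Fin 3 → ℤ) × (Fin 3 → ℤ) × (Fin 3 → ℤ)) → ((Fin 3 → ℤ) × (Fin 3 → ℤ)) :=
      fun p => (p.1, p.2.1) with hfdef
    have hmem : ∀ p ∈ t, f p ∈ t.image f := fun p hp => Finset.mem_image_of_mem f hp
    have hsum : t.card = ∑ v ∈ t.image f, (t.filter fun p => f p = v).card :=
      Finset.card_eq_sum_card_fiberwise hmem
    set B : ℝ := 1000000 * (N₃^3 / min N₃ N₁₂) with hBdef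
    have hminpos : (0:ℝ) < min N₃ N₁₂ := lt_min (by linarith) (by linarith)
    have hB0 : 0 ≤ B := by rw [hBdef]; positivity
    have hfiber : ∀ v ∈ t.image f, ((t.filter fun p => f p = v).card : ℝ) ≤ B := by
      intro v hv
      obtain ⟨p₀, hp₀t, hp₀v⟩ := Finset.mem_image.mp hv
      have hp₀T : p₀ ∈ T := hTfin.mem_toFinset.mp hp₀t
      have hjv : N₁₂ ≤ jap v.1 := by
        rw [← hp₀v]; exact hp₀T.1.1
      set c : ℝ := ε₀ * ((m:ℝ) - ε₁ * jap v.2 - ε₂ * jap (v.1 - v.2)) with hcdef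
      set K : Set (Fin 3 → ℤ) := {n | jap n ≤ 2*N₃ ∧
          |jap (n + v.1) + (ε₀*ε₃) * jap n - c| ≤ 1} with hKdef
      have hKsub : K ⊆ ↑(box (2*N₃)) := fun n hn => mem_box hn.1
      have hKfin : K.Finite := Set.Finite.subset (Finset.finite_toSet _) hKsub
      have hmapsK : ∀ p ∈ t.filter (fun p => f p = v), p.2.2 ∈ hKfin.toFinset := by
        intro p hp
        rw [Finset.mem_filter] at hp
        obtain ⟨hpt, hpv⟩ := hp
        have hpT : p ∈ T := hTfin.mem_toFinset.mp hpt
        have hq1 : p.1 = v.1 := congrArg Prod.fst hpv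
        have hq2 : p.2.1 = v.2 := congrArg Prod.snd hpv
        rw [hKfin.mem_toFinset]
        refine ⟨hpT.2.2.1.2, ?_⟩
        have hphase := hpT.2.2.2
        rw [hq1, hq2] at hphase
        have hkey : jap (p.2.2 + v.1) + (ε₀*ε₃) * jap p.2.2 - c =
            ε₀ * (ε₀ * jap (v.1 + p.2.2) + ε₁ * jap v.2 + ε₂ * jap (v.1 - v.2) +
              ε₃ * jap p.2.2 - (m:ℝ)) := by
          rw [hcdef, add_comm p.2.2 v.1]
          linear_combination (-(jap (v.1 + p.2.2))) * (sign_sq h0)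
        rw [hkey, abs_mul, h0.abs', one_mul]
        exact hphase
      have hinjK : Set.InjOn (fun p => p.2.2) (↑(t.filter fun p => f p = v) :
          Set ((Fin 3 → ℤ) × (Fin 3 → ℤ) × (Fin 3 → ℤ))) := by
        intro p hp q hq hpq
        simp only [Finset.coe_filter, Set.mem_setOf_eq] at hp hq
        have ha1 : p.1 = v.1 := congrArg Prod.fst hp.2
        have ha2 : p.2.1 = v.2 := congrArg Prod.snd hp.2
        have ha3 : q.1 = v.1 := congrArg Prod.fst hq.2
        have ha4 : q.2.1 = v.2 := congrArg Prod.snd hq.2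
        exact Prod.ext (ha1.trans ha3.symm) (Prod.ext (ha2.trans ha4.symm) hpq)
      have hcard1 : (t.filter fun p => f p = v).card ≤ hKfin.toFinset.card :=
        Finset.card_le_card_of_injOn _ hmapsK hinjK
      have hKcard : (K.ncard : ℝ) = (hKfin.toFinset.card : ℝ) := by
        rw [Set.ncard_eq_toFinset_card _ hKfin]
      have hkc := key_count' (ε₀*ε₃) (h0.mul h3) v.1 c N₃ N₁₂ hN3 (by linarith) hjv
      calc ((t.filter fun p => f p = v).card : ℝ) ≤ (hKfin.toFinset.card : ℝ) := by
            exact_mod_cast hcard1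
        _ = (K.ncard : ℝ) := hKcard.symm
        _ ≤ B := hkc
    have himg : t.image f ⊆ box (2*N₁₂) ×ˢ box (2*N₁) := by
      intro v hv
      obtain ⟨p₀, hp₀t, hp₀v⟩ := Finset.mem_image.mp hv
      have hp₀T : p₀ ∈ T := hTfin.mem_toFinset.mp hp₀t
      rw [Finset.mem_product, ← hp₀v]
      exact ⟨mem_box hp₀T.1.2, mem_box hp₀T.2.1.2⟩
    have himgcard : ((t.image f).card : ℝ) ≤ (216*N₁₂^3) * (216*N₁^3) := by
      have hc1 : (t.image f).card ≤ ((box (2*N₁₂)).card) * ((box (2*N₁)).card) := by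
        calc (t.image f).card ≤ (box (2*N₁₂) ×ˢ box (2*N₁)).card := Finset.card_le_card himg
          _ = _ := Finset.card_product _ _
      calc ((t.image f).card : ℝ) ≤ ((box (2*N₁₂)).card : ℝ) * ((box (2*N₁)).card : ℝ) := by
            exact_mod_cast hc1
        _ ≤ (216*N₁₂^3) * (216*N₁^3) :=
            mul_le_mul hbox12 hbox1 (by positivity) (by positivity)
    have htotal : (t.card : ℝ) ≤ ((t.image f).card : ℝ) * B := by
      rw [hsum]
      push_cast
      calc ∑ v ∈ t.image f, ((t.filter fun p => f p = v).card : ℝ)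
          ≤ ∑ _v ∈ t.image f, B := Finset.sum_le_sum hfiber
        _ = ((t.image f).card : ℝ) * B := by rw [Finset.sum_const, nsmul_eq_mul]
    have hfinal : (t.card : ℝ) ≤ (216*N₁₂^3) * (216*N₁^3) * B :=
      le_trans htotal (mul_le_mul_of_nonneg_right himgcard hB0)
    rw [hBdef] at hfinal
    have heq : (216*N₁₂^3) * (216*N₁^3) * (1000000 * (N₃^3 / min N₃ N₁₂)) =
        46656000000 * (min N₁₂ N₃)⁻¹ * (N₁₂ * N₁ * N₃)^3 := by
      rw [min_comm N₃ N₁₂, div_eq_mul_inv]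
      ring
    rw [heq] at hfinal
    exact hfinal
  · -- case N₃ ≤ N₁ : count in the n₁ variable
    have hmaxeq : max N₁ N₃ = N₁ := max_eq_left hmax
    rw [hmaxeq, hTcard]
    set f : ((Fin 3 → ℤ) × (Fin 3 → ℤ) × (Fin 3 → ℤ)) → ((Fin 3 → ℤ) × (Fin 3 → ℤ)) :=
      fun p => (p.1, p.2.2) with hfdef
    have hmem : ∀ p ∈ t, f p ∈ t.image f := fun p hp => Finset.mem_image_of_mem f hp
    have hsum : t.card = ∑ v ∈ t.image f, (t.filter fun p => f p = v).card :=
      Finset.card_eq_sum_card_fiberwise hmem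
    set B : ℝ := 1000000 * (N₁^3 / min N₁ N₁₂) with hBdef
    have hminpos : (0:ℝ) < min N₁ N₁₂ := lt_min (by linarith) (by linarith)
    have hB0 : 0 ≤ B := by rw [hBdef]; positivity
    have hfiber : ∀ v ∈ t.image f, ((t.filter fun p => f p = v).card : ℝ) ≤ B := by
      intro v hv
      obtain ⟨p₀, hp₀t, hp₀v⟩ := Finset.mem_image.mp hv
      have hp₀T : p₀ ∈ T := hTfin.mem_toFinset.mp hp₀t
      have hjv : N₁₂ ≤ jap v.1 := by
        rw [← hp₀v]; exact hp₀T.1.1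
      have hjv' : N₁₂ ≤ jap (-v.1) := by rw [jap_neg]; exact hjv
      set c : ℝ := ε₂ * ((m:ℝ) - ε₀ * jap (v.1 + v.2) - ε₃ * jap v.2) with hcdef
      set K : Set (Fin 3 → ℤ) := {n | jap n ≤ 2*N₁ ∧
          |jap (n + -v.1) + (ε₂*ε₁) * jap n - c| ≤ 1} with hKdef
      have hKsub : K ⊆ ↑(box (2*N₁)) := fun n hn => mem_box hn.1
      have hKfin : K.Finite := Set.Finite.subset (Finset.finite_toSet _) hKsub
      have hmapsK : ∀ p ∈ t.filter (fun p => f p = v), p.2.1 ∈ hKfin.toFinset := by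
        intro p hp
        rw [Finset.mem_filter] at hp
        obtain ⟨hpt, hpv⟩ := hp
        have hpT : p ∈ T := hTfin.mem_toFinset.mp hpt
        have hpv' : (p.1, p.2.2) = v := hpv
        have hq1 : p.1 = v.1 := (Prod.ext_iff.mp hpv').1
        have hq2 : p.2.2 = v.2 := (Prod.ext_iff.mp hpv').2
        rw [hKfin.mem_toFinset]
        refine ⟨hpT.2.1.2, ?_⟩
        have hphase := hpT.2.2.2
        rw [hq1, hq2] at hphase
        have hjj : jap (p.2.1 + -v.1) = jap (v.1 - p.2.1) := by
          rw [show v.1 - p.2.1 = -(p.2.1 + -v.1) by ring, jap_neg]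
        have hkey : jap (p.2.1 + -v.1) + (ε₂*ε₁) * jap p.2.1 - c =
            ε₂ * (ε₀ * jap (v.1 + v.2) + ε₁ * jap p.2.1 + ε₂ * jap (v.1 - p.2.1) +
              ε₃ * jap v.2 - (m:ℝ)) := by
          rw [hcdef, hjj]
          linear_combination (-(jap (v.1 - p.2.1))) * (sign_sq h2)
        rw [hkey, abs_mul, h2.abs', one_mul]
        exact hphase
      have hinjK : Set.InjOn (fun p => p.2.1) (↑(t.filter fun p => f p = v) :
          Set ((Fin 3 → ℤ) × (Fin 3 → ℤ) × (Fin 3 → ℤ))) := by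
        intro p hp q hq hpq
        simp only [Finset.coe_filter, Set.mem_setOf_eq] at hp hq
        have hp2' : (p.1, p.2.2) = v := hp.2
        have hq2' : (q.1, q.2.2) = v := hq.2
        have ha1 : p.1 = v.1 := (Prod.ext_iff.mp hp2').1
        have ha2 : p.2.2 = v.2 := (Prod.ext_iff.mp hp2').2
        have ha3 : q.1 = v.1 := (Prod.ext_iff.mp hq2').1
        have ha4 : q.2.2 = v.2 := (Prod.ext_iff.mp hq2').2
        exact Prod.ext (ha1.trans ha3.symm) (Prod.ext hpq (ha2.trans ha4.symm))
      have hcard1 : (t.filter fun p => f p = v).card ≤ hKfin.toFinset.card :=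
        Finset.card_le_card_of_injOn _ hmapsK hinjK
      have hKcard : (K.ncard : ℝ) = (hKfin.toFinset.card : ℝ) := by
        rw [Set.ncard_eq_toFinset_card _ hKfin]
      have hkc := key_count' (ε₂*ε₁) (h2.mul h1) (-v.1) c N₁ N₁₂ hN1 (by linarith) hjv'
      calc ((t.filter fun p => f p = v).card : ℝ) ≤ (hKfin.toFinset.card : ℝ) := by
            exact_mod_cast hcard1
        _ = (K.ncard : ℝ) := hKcard.symm
        _ ≤ B := hkc
    have himg : t.image f ⊆ box (2*N₁₂) ×ˢ box (2*N₃) := by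
      intro v hv
      obtain ⟨p₀, hp₀t, hp₀v⟩ := Finset.mem_image.mp hv
      have hp₀T : p₀ ∈ T := hTfin.mem_toFinset.mp hp₀t
      rw [Finset.mem_product, ← hp₀v]
      exact ⟨mem_box hp₀T.1.2, mem_box hp₀T.2.2.1.2⟩
    have himgcard : ((t.image f).card : ℝ) ≤ (216*N₁₂^3) * (216*N₃^3) := by
      have hc1 : (t.image f).card ≤ ((box (2*N₁₂)).card) * ((box (2*N₃)).card) := by
        calc (t.image f).card ≤ (box (2*N₁₂) ×ˢ box (2*N₃)).card := Finset.card_le_card himg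
          _ = _ := Finset.card_product _ _
      calc ((t.image f).card : ℝ) ≤ ((box (2*N₁₂)).card : ℝ) * ((box (2*N₃)).card : ℝ) := by
            exact_mod_cast hc1
        _ ≤ (216*N₁₂^3) * (216*N₃^3) :=
            mul_le_mul hbox12 hbox3 (by positivity) (by positivity)
    have htotal : (t.card : ℝ) ≤ ((t.image f).card : ℝ) * B := by
      rw [hsum]
      push_cast
      calc ∑ v ∈ t.image f, ((t.filter fun p => f p = v).card : ℝ)
          ≤ ∑ _v ∈ t.image f, B := Finset.sum_le_sum hfiber
        _ = ((t.image f).card : ℝ) * B := by rw [Finset.sum_const, nsmul_eq_mul]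
    have hfinal : (t.card : ℝ) ≤ (216*N₁₂^3) * (216*N₃^3) * B :=
      le_trans htotal (mul_le_mul_of_nonneg_right himgcard hB0)
    rw [hBdef] at hfinal
    have heq : (216*N₁₂^3) * (216*N₃^3) * (1000000 * (N₁^3 / min N₁ N₁₂)) =
        46656000000 * (min N₁₂ N₁)⁻¹ * (N₁₂ * N₁ * N₃)^3 := by
      rw [min_comm N₁ N₁₂, div_eq_mul_inv]
      ring
    rw [heq] at hfinal
    exact hfinal
end
end

section
/- There exists an absolute constant C > 0 such that for all signs ε₀, ε₁, ε₂, ε₃ ∈ {−1, +1}, all real numbers N₁₂, N₂, N₃ ≥ 1, all m ∈ ℤ, and every fixed n ∈ ℤ³, the number of triples (q, n₂, n₃) ∈ (ℤ³)³ with ⟨q⟩ ∼ N₁₂, ⟨n₂⟩ ∼ N₂, ⟨n₃⟩ ∼ N₃, q + n₃ = n, and |ε₀⟨n⟩ + ε₁⟨q − n₂⟩ + ε₂⟨n₂⟩ + ε₃⟨n₃⟩ − m| ≤ 1 is at most C · min(N₁₂, N₂)⁻¹ · (N₁₂ N₂)³. (Here q plays the role of n₁₂ and q − n₂ the role of n₁.)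 -/
noncomputable section

/-!
Since `n₃ = n - q` is determined by `q`, it suffices to show that for each of the `O(N₁₂³)`
admissible `q` at most `O(N₂³ / min(N₁₂, N₂))` lattice points `n₂` with `⟨n₂⟩ ≤ 2N₂` satisfy
`|ε₁⟨q - n₂⟩ + ε₂⟨n₂⟩ - σ| ≤ 1`. The bracket is 1-Lipschitz, so the unit cubes at these points
lie in the set of real `y` with `⟨y⟩ ≤ 2N₂ + 2` and `|ε₁⟨q - y⟩ + ε₂⟨y⟩ - σ| ≤ 5`, and the count
is bounded by the volume of that set. On the shell `a ≤ ⟨y⟩ ≤ a + 1` the condition fixes `⟨q - y⟩`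
up to `O(1)`, so by `2⟪q, y⟫ = |q|² + ⟨y⟩² - ⟨q - y⟩²` the point `y` lies in a slab orthogonal to
`q` of width `O((a + |q|) / |q|)`. Every planar slice of the shell has area `π(2a + 1)`, so the
shell meets the slab in volume `O(a (a + |q|) / |q|)`. Summing over `a ≤ 2N₂ + 2` gives
`O(N₂² (N₂ + |q|) / |q|)`, which is `O(N₂³ / min(N₁₂, N₂))` because `|q| ≳ N₁₂`.
-/

open MeasureTheory Real Set Function
open scoped ENNReal RealInnerProductSpace

section JapaneseBracket

variable {F : Type*} [NormedAddCommGroup F]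

def japaneseBracket (y : F) : ℝ := √(1 + ‖y‖ ^ 2)

lemma japaneseBracket_sq (y : F) : japaneseBracket y ^ 2 = 1 + ‖y‖ ^ 2 :=
  Real.sq_sqrt (by positivity)

lemma japaneseBracket_nonneg (y : F) : 0 ≤ japaneseBracket y := Real.sqrt_nonneg _

lemma one_le_japaneseBracket (y : F) : 1 ≤ japaneseBracket y :=
  Real.one_le_sqrt.mpr (le_add_of_nonneg_right (by positivity))

lemma norm_le_japaneseBracket (y : F) : ‖y‖ ≤ japaneseBracket y :=
  Real.le_sqrt_of_sq_le (by linarith)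

lemma japaneseBracket_le_one_add_norm (y : F) : japaneseBracket y ≤ 1 + ‖y‖ :=
  Real.sqrt_le_iff.mpr ⟨by positivity, by nlinarith [norm_nonneg y]⟩

lemma abs_japaneseBracket_sub_le (y z : F) :
    |japaneseBracket y - japaneseBracket z| ≤ ‖y - z‖ := by
  set A := japaneseBracket y
  set B := japaneseBracket z
  have hpos : 0 < A + B := by linarith [one_le_japaneseBracket y, one_le_japaneseBracket z]
  have hdiff : |A - B| * (A + B) = |‖y‖ - ‖z‖| * (‖y‖ + ‖z‖) := by
    rw [← abs_of_pos hpos, ← abs_mul, ← abs_of_nonneg (by positivity : 0 ≤ ‖y‖ + ‖z‖),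
      ← abs_mul]
    congr 1
    linear_combination japaneseBracket_sq y - japaneseBracket_sq z
  have hsum : ‖y‖ + ‖z‖ ≤ A + B :=
    add_le_add (norm_le_japaneseBracket y) (norm_le_japaneseBracket z)
  calc |A - B| ≤ |‖y‖ - ‖z‖| := le_of_mul_le_mul_right
        (hdiff.trans_le (mul_le_mul_of_nonneg_left hsum (abs_nonneg _))) hpos
    _ ≤ ‖y - z‖ := abs_norm_sub_norm_le y z

def bracketShell (a : ℝ) : Set F := {y | a ≤ japaneseBracket y ∧ japaneseBracket y ≤ a + 1}

lemma setOf_japaneseBracket_le_subset_iUnion_bracketShell (R : ℝ) :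
    {y : F | japaneseBracket y ≤ R} ⊆ ⋃ a ∈ Finset.range ⌈R⌉₊, bracketShell (a : ℝ) := by
  intro y (hyR : japaneseBracket y ≤ R)
  have hk : 1 ≤ ⌈japaneseBracket y⌉₊ := Nat.one_le_iff_ne_zero.mpr
    (Nat.ceil_pos.mpr (zero_lt_one.trans_le (one_le_japaneseBracket y))).ne'
  have hkR : ⌈japaneseBracket y⌉₊ ≤ ⌈R⌉₊ := Nat.ceil_mono hyR
  refine mem_iUnion₂.mpr ⟨⌈japaneseBracket y⌉₊ - 1, Finset.mem_range.mpr (by omega), ?_, ?_⟩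
  · rw [Nat.cast_sub hk, Nat.cast_one]
    linarith [Nat.ceil_lt_add_one (japaneseBracket_nonneg y)]
  · rw [Nat.cast_sub hk, Nat.cast_one, sub_add_cancel]
    exact Nat.le_ceil _

end JapaneseBracket

lemma IsSign.abs_eq_one {ε : ℝ} (h : IsSign ε) : |ε| = 1 := by
  rcases h with rfl | rfl <;> norm_num

lemma IsSign.mul_self_eq_one {ε : ℝ} (h : IsSign ε) : ε * ε = 1 := by
  rcases h with rfl | rfl <;> norm_num

section Resonance

variable {F : Type*} [NormedAddCommGroup F]

def resonantSet (ε₁ ε₂ σ δ : ℝ) (q : F) : Set F :=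
  {y | |ε₁ * japaneseBracket (q - y) + ε₂ * japaneseBracket y - σ| ≤ δ}

variable {ε₁ ε₂ σ δ : ℝ} {q : F}

lemma mem_resonantSet_of_norm_sub_le (hε₁ : IsSign ε₁) (hε₂ : IsSign ε₂) {y y' : F} {r : ℝ}
    (hy' : y' ∈ resonantSet ε₁ ε₂ σ δ q) (hyy' : ‖y - y'‖ ≤ r) :
    y ∈ resonantSet ε₁ ε₂ σ (δ + 2 * r) q := by
  have h₀ : |ε₁ * japaneseBracket (q - y') + ε₂ * japaneseBracket y' - σ| ≤ δ := hy'
  have h₁ : |japaneseBracket (q - y) - japaneseBracket (q - y')| ≤ r := by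
    refine (abs_japaneseBracket_sub_le _ _).trans ?_
    rwa [sub_sub_sub_cancel_left, norm_sub_rev]
  have h₂ : |japaneseBracket y - japaneseBracket y'| ≤ r :=
    (abs_japaneseBracket_sub_le _ _).trans hyy'
  have hsplit : ε₁ * japaneseBracket (q - y) + ε₂ * japaneseBracket y - σ
      = (ε₁ * japaneseBracket (q - y') + ε₂ * japaneseBracket y' - σ)
        + ε₁ * (japaneseBracket (q - y) - japaneseBracket (q - y'))
        + ε₂ * (japaneseBracket y - japaneseBracket y') := by ring
  show |ε₁ * japaneseBracket (q - y) + ε₂ * japaneseBracket y - σ| ≤ δ + 2 * r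
  rw [hsplit]
  refine (abs_add_le _ _).trans ((add_le_add (abs_add_le _ _) le_rfl).trans ?_)
  rw [abs_mul, abs_mul, hε₁.abs_eq_one, hε₂.abs_eq_one]
  linarith

/-- On the shell `a ≤ ⟨y⟩ ≤ a + 1`, resonance pins `⟨q - y⟩` near `ε₁ (σ - ε₂ a)`, and the
polarization identity `2⟪q, y⟫ = ‖q‖² + ⟨y⟩² - ⟨q - y⟩²` turns this into a slab condition. -/
lemma abs_two_inner_sub_le_of_mem_resonantSet [InnerProductSpace ℝ F] (hε₁ : IsSign ε₁)
    (hε₂ : IsSign ε₂) {y : F} (hy : y ∈ resonantSet ε₁ ε₂ σ δ q) {a : ℝ} (ha : 0 ≤ a)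
    (hshell : y ∈ bracketShell a) :
    |2 * ⟪q, y⟫ - (‖q‖ ^ 2 + a ^ 2 - (ε₁ * (σ - ε₂ * a)) ^ 2)|
      ≤ 2 * a + 1 + (δ + 1) * (2 * ‖q‖ + 2 * a + δ + 5) := by
  obtain ⟨hya, hya'⟩ := hshell
  set A := japaneseBracket y
  set B := japaneseBracket (q - y)
  set β := ε₁ * (σ - ε₂ * a)
  have hB : B - β = ε₁ * (ε₁ * B + ε₂ * A - σ) + ε₁ * ε₂ * (a - A) := by
    linear_combination (-B) * hε₁.mul_self_eq_one
  have hBβ : |B - β| ≤ δ + 1 := by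
    rw [hB]
    refine (abs_add_le _ _).trans ?_
    rw [abs_mul, abs_mul, abs_mul, hε₁.abs_eq_one, hε₂.abs_eq_one, one_mul, one_mul, one_mul]
    exact add_le_add hy (abs_le.mpr ⟨by linarith, by linarith⟩)
  have hBle : B ≤ ‖q‖ + a + 2 := by
    have := japaneseBracket_le_one_add_norm (q - y)
    have := norm_sub_le q y
    have := norm_le_japaneseBracket y
    linarith
  have hBβ' : |B + β| ≤ 2 * ‖q‖ + 2 * a + δ + 5 := by
    have := japaneseBracket_nonneg (q - y)
    rw [abs_le] at hBβ ⊢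
    constructor <;> linarith
  have hpolar : 2 * ⟪q, y⟫ = ‖q‖ ^ 2 + A ^ 2 - B ^ 2 := by
    rw [japaneseBracket_sq, japaneseBracket_sq, norm_sub_sq_real]
    ring
  have hA : |A ^ 2 - a ^ 2| ≤ 2 * a + 1 := by
    rw [abs_le]
    constructor <;> nlinarith
  have hsq : |B ^ 2 - β ^ 2| ≤ (δ + 1) * (2 * ‖q‖ + 2 * a + δ + 5) := by
    rw [show B ^ 2 - β ^ 2 = (B - β) * (B + β) by ring, abs_mul]
    exact mul_le_mul hBβ hBβ' (abs_nonneg _) ((abs_nonneg _).trans hBβ)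
  rw [hpolar, show ‖q‖ ^ 2 + A ^ 2 - B ^ 2 - (‖q‖ ^ 2 + a ^ 2 - β ^ 2)
    = (A ^ 2 - a ^ 2) - (B ^ 2 - β ^ 2) by ring]
  exact (abs_sub _ _).trans (add_le_add hA hsq)

end Resonance

lemma ENNReal.ofReal_sqrt_sq (s : ℝ) : ENNReal.ofReal √s ^ 2 = ENNReal.ofReal s := by
  rcases le_total 0 s with hs | hs
  · rw [← ENNReal.ofReal_pow (Real.sqrt_nonneg _), Real.sq_sqrt hs]
  · simp [Real.sqrt_eq_zero'.mpr hs, ENNReal.ofReal_of_nonpos hs]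

lemma volume_annulus_le (s₁ s₂ : ℝ) :
    volume {w : Fin 2 → ℝ | s₁ ≤ ∑ j, w j ^ 2 ∧ ∑ j, w j ^ 2 ≤ s₂}
      ≤ ENNReal.ofReal (π * (s₂ - s₁)) := by
  rcases lt_or_ge s₂ s₁ with hlt | hle
  · have hempty : {w : Fin 2 → ℝ | s₁ ≤ ∑ j, w j ^ 2 ∧ ∑ j, w j ^ 2 ≤ s₂} = ∅ :=
      eq_empty_of_forall_notMem fun _ hw => (hw.1.trans hw.2).not_gt hlt
    rw [hempty, measure_empty]
    exact zero_le
  rw [← (EuclideanSpace.volume_preserving_symm_measurableEquiv_toLp (Fin 2)).measure_preimage_equiv]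
  have hsub : (MeasurableEquiv.toLp 2 (Fin 2 → ℝ)).symm ⁻¹'
        {w : Fin 2 → ℝ | s₁ ≤ ∑ j, w j ^ 2 ∧ ∑ j, w j ^ 2 ≤ s₂}
      ⊆ Metric.closedBall 0 √s₂ \ Metric.ball 0 √s₁ := by
    rintro z ⟨h₁, h₂⟩
    have hz : ‖z‖ ^ 2 = ∑ j, z j ^ 2 := EuclideanSpace.real_norm_sq_eq z
    simp only [mem_sdiff, Metric.mem_closedBall, Metric.mem_ball, dist_zero_right, not_lt]
    exact ⟨Real.le_sqrt_of_sq_le (hz ▸ h₂), (Real.sqrt_le_left (norm_nonneg z)).mpr (hz ▸ h₁)⟩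
  have hball : Metric.ball (0 : EuclideanSpace ℝ (Fin 2)) √s₁ ⊆ Metric.closedBall 0 √s₂ :=
    Metric.ball_subset_closedBall.trans
      (Metric.closedBall_subset_closedBall (Real.sqrt_le_sqrt hle))
  refine (measure_mono hsub).trans ?_
  rw [measure_sdiff hball measurableSet_ball.nullMeasurableSet measure_ball_lt_top.ne,
    EuclideanSpace.volume_closedBall_fin_two, EuclideanSpace.volume_ball_fin_two,
    ENNReal.ofReal_sqrt_sq, ENNReal.ofReal_sqrt_sq, tsub_le_iff_right,
    ← ENNReal.ofReal_mul' pi_nonneg, ← ENNReal.ofReal_mul' pi_nonneg]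
  exact (ENNReal.ofReal_le_ofReal (by linarith)).trans ENNReal.ofReal_add_le

lemma volume_shell_inter_coord_slab_le (s₁ s₂ c₁ c₂ : ℝ) :
    volume {z : Fin 3 → ℝ | (s₁ ≤ ∑ i, z i ^ 2 ∧ ∑ i, z i ^ 2 ≤ s₂) ∧ z 0 ∈ Icc c₁ c₂}
      ≤ ENNReal.ofReal (π * (s₂ - s₁)) * ENNReal.ofReal (c₂ - c₁) := by
  set T : Set (ℝ × (Fin 2 → ℝ)) := {p | (s₁ ≤ p.1 ^ 2 + ∑ j, p.2 j ^ 2 ∧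
      p.1 ^ 2 + ∑ j, p.2 j ^ 2 ≤ s₂) ∧ p.1 ∈ Icc c₁ c₂}
  have hT : MeasurableSet T := by measurability
  have hpre : {z : Fin 3 → ℝ | (s₁ ≤ ∑ i, z i ^ 2 ∧ ∑ i, z i ^ 2 ≤ s₂) ∧ z 0 ∈ Icc c₁ c₂}
      = MeasurableEquiv.piFinSuccAbove (fun _ => ℝ) 0 ⁻¹' T := by
    ext z
    simp [T, Fin.sum_univ_succ, Fin.tail]
  have hsection : ∀ t, volume (Prod.mk t ⁻¹' T)
      ≤ (Icc c₁ c₂).indicator (fun _ => ENNReal.ofReal (π * (s₂ - s₁))) t := by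
    intro t
    by_cases ht : t ∈ Icc c₁ c₂
    · rw [indicator_of_mem ht]
      refine (measure_mono fun w hw => ?_).trans
        ((volume_annulus_le (s₁ - t ^ 2) (s₂ - t ^ 2)).trans_eq (by ring_nf))
      exact ⟨by linarith [hw.1.1], by linarith [hw.1.2]⟩
    · have hempty : Prod.mk t ⁻¹' T = ∅ := eq_empty_of_forall_notMem fun _ hw => ht hw.2
      rw [indicator_of_notMem ht, hempty, measure_empty]
  rw [hpre, (volume_preserving_piFinSuccAbove (fun _ => ℝ) 0).measure_preimage_equiv,
    Measure.volume_eq_prod, Measure.prod_apply hT]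
  calc ∫⁻ t, volume (Prod.mk t ⁻¹' T)
      ≤ ∫⁻ t, (Icc c₁ c₂).indicator (fun _ => ENNReal.ofReal (π * (s₂ - s₁))) t :=
        lintegral_mono hsection
    _ = _ := by rw [lintegral_indicator_const measurableSet_Icc, Real.volume_Icc]

section ResonantVolume

variable {F : Type*} [NormedAddCommGroup F] [InnerProductSpace ℝ F] [FiniteDimensional ℝ F]
  [MeasurableSpace F] [BorelSpace F]

lemma volume_shell_inter_slab_le (hF : Module.finrank ℝ F = 3) {u : F} (hu : ‖u‖ = 1)
    (s₁ s₂ c₁ c₂ : ℝ) :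
    volume {y : F | (s₁ ≤ ‖y‖ ^ 2 ∧ ‖y‖ ^ 2 ≤ s₂) ∧ ⟪u, y⟫ ∈ Icc c₁ c₂}
      ≤ ENNReal.ofReal (π * (s₂ - s₁)) * ENNReal.ofReal (c₂ - c₁) := by
  obtain ⟨b, hb⟩ := Orthonormal.exists_orthonormalBasis_extension_of_card_eq
    (by simpa using hF) (v := fun _ : Fin 3 => u) (s := {0})
    (by simp [orthonormal_subsingleton_iff, hu])
  have hset : {y : F | (s₁ ≤ ‖y‖ ^ 2 ∧ ‖y‖ ^ 2 ≤ s₂) ∧ ⟪u, y⟫ ∈ Icc c₁ c₂}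
      = b.measurableEquiv ⁻¹' ((MeasurableEquiv.toLp 2 (Fin 3 → ℝ)).symm ⁻¹'
        {z | (s₁ ≤ ∑ i, z i ^ 2 ∧ ∑ i, z i ^ 2 ≤ s₂) ∧ z 0 ∈ Icc c₁ c₂}) := by
    ext y
    have hnorm : ∑ i, ⟪b i, y⟫ ^ 2 = ‖y‖ ^ 2 := by
      simp_rw [← b.repr_apply_apply, ← EuclideanSpace.real_norm_sq_eq, b.repr.norm_map]
    simp [OrthonormalBasis.measurableEquiv, hnorm, OrthonormalBasis.repr_apply_apply, hb 0 rfl]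
  rw [hset, b.measurePreserving_measurableEquiv.measure_preimage_equiv,
    (EuclideanSpace.volume_preserving_symm_measurableEquiv_toLp (Fin 3)).measure_preimage_equiv]
  exact volume_shell_inter_coord_slab_le s₁ s₂ c₁ c₂

variable {ε₁ ε₂ σ δ : ℝ} {q : F}

lemma volume_shell_inter_resonantSet_le (hF : Module.finrank ℝ F = 3) (hε₁ : IsSign ε₁)
    (hε₂ : IsSign ε₂) (hq : q ≠ 0) {a : ℝ} (ha : 0 ≤ a) :
    volume (bracketShell a ∩ resonantSet ε₁ ε₂ σ δ q)
      ≤ ENNReal.ofReal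
        (π * (2 * a + 1) * ((2 * a + 1 + (δ + 1) * (2 * ‖q‖ + 2 * a + δ + 5)) / ‖q‖)) := by
  set ℓ := 2 * a + 1 + (δ + 1) * (2 * ‖q‖ + 2 * a + δ + 5)
  set c := ‖q‖ ^ 2 + a ^ 2 - (ε₁ * (σ - ε₂ * a)) ^ 2
  have hd : 0 < ‖q‖ := norm_pos_iff.mpr hq
  have hu : ‖‖q‖⁻¹ • q‖ = 1 := norm_smul_inv_norm hq
  have hsub : bracketShell a ∩ resonantSet ε₁ ε₂ σ δ q
      ⊆ {y : F | (a ^ 2 - 1 ≤ ‖y‖ ^ 2 ∧ ‖y‖ ^ 2 ≤ (a + 1) ^ 2 - 1) ∧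
          ⟪‖q‖⁻¹ • q, y⟫ ∈ Icc ((c - ℓ) / (2 * ‖q‖)) ((c + ℓ) / (2 * ‖q‖))} := by
    rintro y ⟨hshell, hy⟩
    have hslab := abs_le.mp (abs_two_inner_sub_le_of_mem_resonantSet hε₁ hε₂ hy ha hshell)
    have hsq := japaneseBracket_sq y
    have hinner : ‖q‖⁻¹ * ⟪q, y⟫ * (2 * ‖q‖) = 2 * ⟪q, y⟫ := by field_simp
    refine ⟨⟨by nlinarith [hshell.1], by nlinarith [hshell.2, one_le_japaneseBracket y]⟩, ?_, ?_⟩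
    · rw [real_inner_smul_left, div_le_iff₀ (by positivity), hinner]
      linarith
    · rw [real_inner_smul_left, le_div_iff₀ (by positivity), hinner]
      linarith
  refine (measure_mono hsub).trans ((volume_shell_inter_slab_le hF hu _ _ _ _).trans_eq ?_)
  rw [← ENNReal.ofReal_mul (mul_nonneg pi_pos.le (by linarith))]
  congr 1
  field_simp
  ring

lemma volume_ball_inter_resonantSet_le (hF : Module.finrank ℝ F = 3) (hε₁ : IsSign ε₁)
    (hε₂ : IsSign ε₂) (hq : q ≠ 0) {R : ℝ} (hR : 1 ≤ R) :
    volume ({y | japaneseBracket y ≤ R} ∩ resonantSet ε₁ ε₂ σ 5 q)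
      ≤ ENNReal.ofReal (1800 * R ^ 2 * (R + ‖q‖) / ‖q‖) := by
  set K := ⌈R⌉₊
  have hK : (K : ℝ) ≤ 2 * R := by linarith [Nat.ceil_lt_add_one (zero_le_one.trans hR)]
  have hd : 0 < ‖q‖ := norm_pos_iff.mpr hq
  have hcover : {y | japaneseBracket y ≤ R} ∩ resonantSet ε₁ ε₂ σ 5 q
      ⊆ ⋃ a ∈ Finset.range K, bracketShell (a : ℝ) ∩ resonantSet ε₁ ε₂ σ 5 q := by
    rw [← iUnion₂_inter]
    exact inter_subset_inter_left _ (setOf_japaneseBracket_le_subset_iUnion_bracketShell R)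
  have hterm : ∀ a ∈ Finset.range K,
      volume (bracketShell (a : ℝ) ∩ resonantSet ε₁ ε₂ σ 5 q)
        ≤ ENNReal.ofReal (900 * R * (R + ‖q‖) / ‖q‖) := by
    intro a ha
    have haR : (a : ℝ) ≤ R := by
      have : (a : ℝ) + 1 ≤ K := by exact_mod_cast Finset.mem_range.mp ha
      linarith [Nat.ceil_lt_add_one (zero_le_one.trans hR)]
    refine (volume_shell_inter_resonantSet_le hF hε₁ hε₂ hq a.cast_nonneg).trans
      (ENNReal.ofReal_le_ofReal ?_)
    calc π * (2 * a + 1) * ((2 * a + 1 + (5 + 1) * (2 * ‖q‖ + 2 * a + 5 + 5)) / ‖q‖)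
        = π * (2 * a + 1) * (14 * a + 12 * ‖q‖ + 61) / ‖q‖ := by ring
      _ ≤ 4 * (3 * R) * (75 * (R + ‖q‖)) / ‖q‖ := by
        gcongr
        · exact pi_le_four
        · linarith
        · linarith
      _ = 900 * R * (R + ‖q‖) / ‖q‖ := by ring
  calc volume ({y | japaneseBracket y ≤ R} ∩ resonantSet ε₁ ε₂ σ 5 q)
      ≤ ∑ a ∈ Finset.range K, volume (bracketShell (a : ℝ) ∩ resonantSet ε₁ ε₂ σ 5 q) :=
        (measure_mono hcover).trans (measure_biUnion_finset_le _ _)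
    _ ≤ K • ENNReal.ofReal (900 * R * (R + ‖q‖) / ‖q‖) := by
        simpa using Finset.sum_le_card_nsmul _ _ _ hterm
    _ ≤ ENNReal.ofReal (1800 * R ^ 2 * (R + ‖q‖) / ‖q‖) := by
        rw [nsmul_eq_mul, ← ENNReal.ofReal_natCast, ← ENNReal.ofReal_mul K.cast_nonneg]
        refine ENNReal.ofReal_le_ofReal ?_
        calc (K : ℝ) * (900 * R * (R + ‖q‖) / ‖q‖) ≤ 2 * R * (900 * R * (R + ‖q‖) / ‖q‖) := by
              gcongr
          _ = 1800 * R ^ 2 * (R + ‖q‖) / ‖q‖ := by ring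

end ResonantVolume

section LatticeCount

variable {ι : Type*}

def unitCube (x : ι → ℤ) : Set (ι → ℝ) := univ.pi fun i => Ico (x i : ℝ) (x i + 1)

lemma pairwise_disjoint_unitCube :
    Pairwise (Disjoint on (unitCube : (ι → ℤ) → Set (ι → ℝ))) := by
  intro x x' hne
  refine Set.disjoint_left.mpr fun y hy hy' => hne (funext fun i => ?_)
  rw [← Int.floor_eq_iff.mpr (hy i (mem_univ i)), ← Int.floor_eq_iff.mpr (hy' i (mem_univ i))]

def latticeEmb (x : ι → ℤ) : EuclideanSpace ℝ ι := WithLp.toLp 2 fun i => (x i : ℝ)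

lemma latticeEmb_sub (x y : ι → ℤ) : latticeEmb (x - y) = latticeEmb x - latticeEmb y := by
  ext i
  simp [latticeEmb]

variable [Fintype ι]

lemma volume_unitCube (x : ι → ℤ) : volume (unitCube x) = 1 := by
  simp [unitCube, volume_pi_pi, Real.volume_Ico]

lemma card_le_volume_of_unitCube_subset (s : Finset (ι → ℤ)) {Y : Set (ι → ℝ)}
    (h : ∀ x ∈ s, unitCube x ⊆ Y) : (s.card : ℝ≥0∞) ≤ volume Y :=
  calc (s.card : ℝ≥0∞) = volume (⋃ x ∈ s, unitCube x) := by
        rw [measure_biUnion_finset (pairwise_disjoint_unitCube.set_pairwise _)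
          fun x _ => MeasurableSet.univ_pi fun _ => measurableSet_Ico]
        simp [volume_unitCube]
    _ ≤ volume Y := measure_mono (iUnion₂_subset h)

lemma card_le_volume_of_mapsTo_unitCube (s : Finset (ι → ℤ)) {Y : Set (EuclideanSpace ℝ ι)}
    (h : ∀ x ∈ s, MapsTo (WithLp.toLp 2) (unitCube x) Y) : (s.card : ℝ≥0∞) ≤ volume Y := by
  rw [← (EuclideanSpace.volume_preserving_symm_measurableEquiv_toLp ι).symm.measure_preimage_equiv]
  exact card_le_volume_of_unitCube_subset s fun x hx => (h x hx).subset_preimage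

lemma norm_toLp_sub_latticeEmb_sq_le {x : ι → ℤ} {y : ι → ℝ} (hy : y ∈ unitCube x) :
    ‖WithLp.toLp 2 y - latticeEmb x‖ ^ 2 ≤ Fintype.card ι := by
  rw [EuclideanSpace.real_norm_sq_eq]
  calc ∑ i, (WithLp.toLp 2 y - latticeEmb x) i ^ 2 ≤ ∑ _i : ι, (1 : ℝ) := by
        refine Finset.sum_le_sum fun i _ => ?_
        have := hy i (mem_univ i)
        simp only [latticeEmb, PiLp.sub_apply]
        nlinarith [this.1, this.2]
    _ = Fintype.card ι := by simp

variable [DecidableEq ι]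

def latticeBox (r : ℝ) : Finset (ι → ℤ) := Fintype.piFinset fun _ => Finset.Icc (-⌊r⌋) ⌊r⌋

lemma mem_latticeBox_of_abs_le {r : ℝ} {x : ι → ℤ} (hx : ∀ i, |(x i : ℝ)| ≤ r) :
    x ∈ latticeBox r := by
  refine Fintype.mem_piFinset.mpr fun i => Finset.mem_Icc.mpr ⟨?_, Int.le_floor.mpr ?_⟩
  · rw [neg_le, Int.le_floor, Int.cast_neg]
    linarith [neg_abs_le (x i : ℝ), hx i]
  · exact (le_abs_self _).trans (hx i)

lemma card_latticeBox_le {r : ℝ} (hr : 0 ≤ r) :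
    ((latticeBox r : Finset (ι → ℤ)).card : ℝ) ≤ (2 * r + 1) ^ Fintype.card ι := by
  have hcard : ((Finset.Icc (-⌊r⌋) ⌊r⌋).card : ℤ) = 2 * ⌊r⌋ + 1 := by
    have := Int.floor_nonneg.mpr hr
    rw [Int.card_Icc]
    omega
  have hIcc : ((Finset.Icc (-⌊r⌋) ⌊r⌋).card : ℝ) ≤ 2 * r + 1 := by
    rw [← Int.cast_natCast, hcard]
    push_cast
    linarith [Int.floor_le r]
  rw [latticeBox, Fintype.card_piFinset, Finset.prod_const, Finset.card_univ, Nat.cast_pow]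
  exact pow_le_pow_left₀ (Nat.cast_nonneg _) hIcc _

lemma card_filter_latticeBox_le (p : (ι → ℤ) → Prop) [DecidablePred p] {r : ℝ} (hr : 0 ≤ r) :
    (({x ∈ latticeBox r | p x} : Finset (ι → ℤ)).card : ℝ) ≤ (2 * r + 1) ^ Fintype.card ι :=
  (Nat.cast_le.mpr (Finset.card_le_card (Finset.filter_subset _ _))).trans (card_latticeBox_le hr)

end LatticeCount

section ResonantLatticePoints

lemma jap_eq_japaneseBracket (x : Fin 3 → ℤ) : jap x = japaneseBracket (latticeEmb x) := by
  rw [jap, japaneseBracket, EuclideanSpace.real_norm_sq_eq]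
  rfl

lemma mem_latticeBox_of_jap_le {x : Fin 3 → ℤ} {r : ℝ} (h : jap x ≤ r) : x ∈ latticeBox r :=
  mem_latticeBox_of_abs_le fun i =>
    calc |(x i : ℝ)| = ‖latticeEmb x i‖ := rfl
      _ ≤ ‖latticeEmb x‖ := PiLp.norm_apply_le _ i
      _ ≤ r := (norm_le_japaneseBracket _).trans (jap_eq_japaneseBracket x ▸ h)

open Classical in
def resonantPoints (ε₁ ε₂ σ N : ℝ) (q : Fin 3 → ℤ) : Finset (Fin 3 → ℤ) :=
  {x ∈ latticeBox (2 * N) | jap x ≤ 2 * N ∧ |ε₁ * jap (q - x) + ε₂ * jap x - σ| ≤ 1}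

variable {ε₁ ε₂ σ N : ℝ} {q : Fin 3 → ℤ}

lemma mem_resonantPoints {x : Fin 3 → ℤ} : x ∈ resonantPoints ε₁ ε₂ σ N q ↔
    jap x ≤ 2 * N ∧ |ε₁ * jap (q - x) + ε₂ * jap x - σ| ≤ 1 := by
  rw [resonantPoints, Finset.mem_filter, and_iff_right_iff_imp]
  exact fun h => mem_latticeBox_of_jap_le h.1

lemma card_resonantPoints_le_of_ne_zero (hε₁ : IsSign ε₁) (hε₂ : IsSign ε₂) (hN : 1 ≤ N)
    (hq : latticeEmb q ≠ 0) :
    ((resonantPoints ε₁ ε₂ σ N q).card : ℝ)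
      ≤ 115200 * N ^ 2 * (N + ‖latticeEmb q‖) / ‖latticeEmb q‖ := by
  set d := ‖latticeEmb q‖
  have hd : 0 < d := norm_pos_iff.mpr hq
  have hthicken : ∀ x ∈ resonantPoints ε₁ ε₂ σ N q, MapsTo (WithLp.toLp 2) (unitCube x)
      ({y | japaneseBracket y ≤ 2 * N + 2} ∩ resonantSet ε₁ ε₂ σ 5 (latticeEmb q)) := by
    intro x hx y hy
    obtain ⟨hxN, hxres⟩ := mem_resonantPoints.mp hx
    rw [jap_eq_japaneseBracket, jap_eq_japaneseBracket, latticeEmb_sub] at hxres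
    rw [jap_eq_japaneseBracket] at hxN
    have hdist : ‖WithLp.toLp 2 y - latticeEmb x‖ ≤ 2 := by
      have := norm_toLp_sub_latticeEmb_sq_le hy
      simp only [Fintype.card_fin, Nat.cast_ofNat] at this
      nlinarith [norm_nonneg (WithLp.toLp 2 y - latticeEmb x)]
    refine ⟨?_, by convert mem_resonantSet_of_norm_sub_le hε₁ hε₂ hxres hdist using 1; norm_num⟩
    have := abs_le.mp ((abs_japaneseBracket_sub_le _ _).trans hdist)
    show japaneseBracket _ ≤ _
    linarith [this.2]
  have hvol := (card_le_volume_of_mapsTo_unitCube _ hthicken).trans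
    (volume_ball_inter_resonantSet_le finrank_euclideanSpace_fin hε₁ hε₂ hq (by linarith))
  have hcard := ENNReal.toReal_le_of_le_ofReal (by positivity) hvol
  rw [ENNReal.toReal_natCast] at hcard
  refine hcard.trans ?_
  calc 1800 * (2 * N + 2) ^ 2 * (2 * N + 2 + d) / d ≤ 1800 * (4 * N) ^ 2 * (4 * (N + d)) / d := by
        gcongr <;> linarith
    _ = 115200 * N ^ 2 * (N + d) / d := by ring

lemma card_resonantPoints_le (hε₁ : IsSign ε₁) (hε₂ : IsSign ε₂) {M : ℝ} (hM : 1 ≤ M)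
    (hN : 1 ≤ N) (hq : M ≤ jap q) :
    ((resonantPoints ε₁ ε₂ σ N q).card : ℝ) ≤ 345600 * N ^ 3 / min M N := by
  have hmin : 0 < min M N := lt_min (by linarith) (by linarith)
  rcases lt_or_ge (min M N) 2 with hsmall | hlarge
  · have hbox : ((resonantPoints ε₁ ε₂ σ N q).card : ℝ) ≤ (2 * (2 * N) + 1) ^ 3 :=
      card_filter_latticeBox_le _ (by linarith)
    rw [le_div_iff₀ hmin]
    calc ((resonantPoints ε₁ ε₂ σ N q).card : ℝ) * min M N ≤ (5 * N) ^ 3 * 2 := by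
          gcongr
          exact hbox.trans (by gcongr; linarith)
      _ ≤ 345600 * N ^ 3 := by nlinarith [pow_pos (zero_lt_one.trans_le hN) 3]
  · set d := ‖latticeEmb q‖
    have hjap : jap q ^ 2 = 1 + d ^ 2 := by rw [jap_eq_japaneseBracket, japaneseBracket_sq]
    have hd : min M N ≤ 2 * d := by
      have hM2 : 2 ≤ M := hlarge.trans (min_le_left _ _)
      nlinarith [min_le_left M N, norm_nonneg (latticeEmb q)]
    have hd0 : 0 < d := by linarith
    refine (card_resonantPoints_le_of_ne_zero hε₁ hε₂ hN (norm_pos_iff.mp hd0)).trans ?_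
    rw [div_le_div_iff₀ hd0 hmin]
    nlinarith [mul_le_mul_of_nonneg_left hd (by positivity : 0 ≤ N ^ 3),
      mul_le_mul_of_nonneg_left (min_le_right M N) (by positivity : 0 ≤ N ^ 2 * d)]

end ResonantLatticePoints

/-- Here `p = (n₁₂, n₂, n₃)`, so that `n₁ = p.1 - p.2.1`. -/
theorem sup_counting_iii :
    ∃ C : ℝ, 0 < C ∧
      ∀ ε₀ ε₁ ε₂ ε₃ : ℝ, IsSign ε₀ → IsSign ε₁ → IsSign ε₂ → IsSign ε₃ →
        ∀ N₁₂ N₂ N₃ : ℝ, 1 ≤ N₁₂ → 1 ≤ N₂ → 1 ≤ N₃ →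
          ∀ m : ℤ, ∀ n : Fin 3 → ℤ,
            (({p : (Fin 3 → ℤ) × (Fin 3 → ℤ) × (Fin 3 → ℤ) |
                dy N₁₂ p.1 ∧ dy N₂ p.2.1 ∧ dy N₃ p.2.2 ∧
                p.1 + p.2.2 = n ∧
                |ε₀ * jap n + ε₁ * jap (p.1 - p.2.1) + ε₂ * jap p.2.1 +
                  ε₃ * jap p.2.2 - (m : ℝ)| ≤ 1}).ncard : ℝ)
              ≤ C * (min N₁₂ N₂)⁻¹ * (N₁₂ * N₂) ^ 3 := by
  classical
  refine ⟨125 * 345600, by norm_num, ?_⟩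
  intro ε₀ ε₁ ε₂ ε₃ _ hε₁ hε₂ _ N₁₂ N₂ N₃ hN₁₂ hN₂ _ m n
  set σ : (Fin 3 → ℤ) → ℝ := fun q => m - ε₀ * jap n - ε₃ * jap (n - q)
  set Q := {q ∈ (latticeBox (2 * N₁₂) : Finset (Fin 3 → ℤ)) | N₁₂ ≤ jap q}
  set T := Q.biUnion fun q => (resonantPoints ε₁ ε₂ (σ q) N₂ q).image fun x => (q, x, n - q)
  calc _ ≤ (T.card : ℝ) := by
        rw [← Set.ncard_coe_finset]
        refine Nat.cast_le.mpr (Set.ncard_le_ncard ?_ T.finite_toSet)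
        rintro ⟨q, x, k⟩ ⟨hq, hx, -, hk, hres⟩
        obtain rfl : k = n - q := eq_sub_of_add_eq' hk
        refine Finset.mem_biUnion.mpr ⟨q, Finset.mem_filter.mpr
          ⟨mem_latticeBox_of_jap_le hq.2, hq.1⟩, Finset.mem_image.mpr ⟨x, ?_, rfl⟩⟩
        refine mem_resonantPoints.mpr ⟨hx.2, ?_⟩
        convert hres using 2
        ring
    _ ≤ ∑ q ∈ Q, ((resonantPoints ε₁ ε₂ (σ q) N₂ q).card : ℝ) := by
        exact_mod_cast Finset.card_biUnion_le.trans
          (Finset.sum_le_sum fun _ _ => Finset.card_image_le)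
    _ ≤ Q.card * (345600 * N₂ ^ 3 / min N₁₂ N₂) := by
        rw [← nsmul_eq_mul]
        exact Finset.sum_le_card_nsmul _ _ _ fun q hq =>
          card_resonantPoints_le hε₁ hε₂ hN₁₂ hN₂ (Finset.mem_filter.mp hq).2
    _ ≤ (5 * N₁₂) ^ 3 * (345600 * N₂ ^ 3 / min N₁₂ N₂) := by
        gcongr
        refine (card_filter_latticeBox_le _ (by linarith)).trans ?_
        rw [Fintype.card_fin]
        gcongr
        linarith
    _ = 125 * 345600 * (min N₁₂ N₂)⁻¹ * (N₁₂ * N₂) ^ 3 := by ring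
end
end

section
/- Let t₀ < t₁ be real numbers, let f : [t₀, t₁) → [0, ∞) be a nonnegative function, and let g : [t₀, t₁) → [0, ∞) be a continuous nonnegative function. Let A ≥ 1 and 0 < θ, δ < 1, and assume that f(t) ≤ g(t) ≤ g(t₀) + δ(A² + f(t)²)(f(t) + θ) for all t ∈ [t₀, t₁). Assume furthermore that g(t₀) + δA²θ ≤ 1 and δ(A² + 6) ≤ 1/4. Then f(t) ≤ g(t) ≤ 2(g(t₀) + δA²θ) for all t ∈ [t₀, t₁). -/
/-!
Put `B = g t₀ + δ A² θ`. Wherever `g ≤ 2B`, also `f ≤ 2B ≤ 2`, so the cubic term obeys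
`δ f² (f + θ) ≤ 6 δ f` and the hypothesis on `g` improves to `g ≤ B + δ (A² + 6) f ≤ 3B/2`.
Thus `g` never takes a value in `(3B/2, 2B]`; since `g` is continuous on the connected set
`[t₀, t₁)` and `g t₀ ≤ B`, it cannot jump over this gap, so `g ≤ 3B/2` throughout.
-/

theorem IsPreconnected.forall_le_of_gap {X α : Type*} [TopologicalSpace X] [LinearOrder α]
    [TopologicalSpace α] [OrderClosedTopology α] {s : Set X} (hs : IsPreconnected s)
    {g : X → α} (hg : ContinuousOn g s) {a b : α} (hab : a < b)
    (hgap : ∀ t ∈ s, g t ≤ b → g t ≤ a) {t₀ : X} (ht₀ : t₀ ∈ s) (hgt₀ : g t₀ ≤ b) :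
    ∀ t ∈ s, g t ≤ a := by
  intro t ht
  by_contra! hat
  have hbt : b ≤ g t := not_lt.mp fun hlt => hat.not_ge (hgap t ht hlt.le)
  obtain ⟨u, hu, hgu⟩ := hs.intermediate_value ht₀ ht hg ⟨(hgap t₀ ht₀ hgt₀).trans hab.le, hbt⟩
  exact hab.not_ge (hgu ▸ hgap u hu hgu.le)

theorem le_three_halves_of_le_two_mul {A θ δ f g g₀ : ℝ} (hf : 0 ≤ f) (hθ : 0 ≤ θ) (hθ1 : θ ≤ 1)
    (hδ : 0 ≤ δ) (hfg : f ≤ g) (hg : g ≤ g₀ + δ * (A ^ 2 + f ^ 2) * (f + θ))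
    (hB : g₀ + δ * A ^ 2 * θ ≤ 1) (hδA : δ * (A ^ 2 + 6) ≤ 1 / 4)
    (hg2 : g ≤ 2 * (g₀ + δ * A ^ 2 * θ)) :
    g ≤ 3 / 2 * (g₀ + δ * A ^ 2 * θ) := by
  have hf2 : f ≤ 2 := by linarith
  have hcubic : f ^ 2 * (f + θ) ≤ 6 * f := by
    have : f * (f + θ) ≤ 2 * 3 := mul_le_mul hf2 (by linarith) (by positivity) (by norm_num)
    nlinarith
  calc g ≤ g₀ + δ * A ^ 2 * θ + δ * (A ^ 2 * f + f ^ 2 * (f + θ)) := by linarith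
    _ ≤ g₀ + δ * A ^ 2 * θ + δ * (A ^ 2 + 6) * f := by nlinarith
    _ ≤ g₀ + δ * A ^ 2 * θ + 1 / 4 * f := by gcongr
    _ ≤ 3 / 2 * (g₀ + δ * A ^ 2 * θ) := by linarith

theorem continuity_argument_general (t₀ t₁ : ℝ) (h01 : t₀ < t₁)
    (f g : ℝ → ℝ)
    (hf_nonneg : ∀ t ∈ Set.Ico t₀ t₁, 0 ≤ f t)
    (hg_cont : ContinuousOn g (Set.Ico t₀ t₁))
    (A θ δ : ℝ) (hA : 1 ≤ A) (hθ0 : 0 < θ) (hθ1 : θ < 1) (hδ0 : 0 < δ)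
    (hmain : ∀ t ∈ Set.Ico t₀ t₁,
      f t ≤ g t ∧ g t ≤ g t₀ + δ * (A ^ 2 + f t ^ 2) * (f t + θ))
    (hpar₁ : g t₀ + δ * A ^ 2 * θ ≤ 1)
    (hpar₂ : δ * (A ^ 2 + 6) ≤ 1 / 4) :
    ∀ t ∈ Set.Ico t₀ t₁, f t ≤ g t ∧ g t ≤ 2 * (g t₀ + δ * A ^ 2 * θ) := by
  set B := g t₀ + δ * A ^ 2 * θ
  have ht₀ : t₀ ∈ Set.Ico t₀ t₁ := Set.left_mem_Ico.mpr h01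
  have hgt₀ : 0 ≤ g t₀ := (hf_nonneg t₀ ht₀).trans (hmain t₀ ht₀).1
  have hδAθ : 0 < δ * A ^ 2 * θ := by
    have : 0 < A := by linarith
    positivity
  have hgap : ∀ t ∈ Set.Ico t₀ t₁, g t ≤ 2 * B → g t ≤ 3 / 2 * B := fun t ht =>
    le_three_halves_of_le_two_mul (hf_nonneg t ht) hθ0.le hθ1.le hδ0.le (hmain t ht).1
      (hmain t ht).2 hpar₁ hpar₂
  have hbound := isPreconnected_Ico.forall_le_of_gap hg_cont (by linarith) hgap ht₀ (by linarith)
  exact fun t ht => ⟨(hmain t ht).1, (hbound t ht).trans (by linarith)⟩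

/-- **Continuity (bootstrap) argument** (Lemma 4.3): note that no continuity of `f` is
assumed — only the continuous majorant `g` is used to close the bootstrap. -/
theorem continuity_argument (t₀ t₁ : ℝ) (h01 : t₀ < t₁)
    (f g : ℝ → ℝ)
    (hf_nonneg : ∀ t ∈ Set.Ico t₀ t₁, 0 ≤ f t)
    (hg_nonneg : ∀ t ∈ Set.Ico t₀ t₁, 0 ≤ g t)
    (hg_cont : ContinuousOn g (Set.Ico t₀ t₁))
    (A θ δ : ℝ) (hA : 1 ≤ A) (hθ0 : 0 < θ) (hθ1 : θ < 1) (hδ0 : 0 < δ) (hδ1 : δ < 1)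
    (hmain : ∀ t ∈ Set.Ico t₀ t₁,
      f t ≤ g t ∧ g t ≤ g t₀ + δ * (A ^ 2 + f t ^ 2) * (f t + θ))
    (hpar₁ : g t₀ + δ * A ^ 2 * θ ≤ 1)
    (hpar₂ : δ * (A ^ 2 + 6) ≤ 1 / 4) :
    ∀ t ∈ Set.Ico t₀ t₁, f t ≤ g t ∧ g t ≤ 2 * (g t₀ + δ * A ^ 2 * θ) :=
  continuity_argument_general t₀ t₁ h01 f g hf_nonneg hg_cont A θ δ hA hθ0 hθ1 hδ0 hmain hpar₁ hpar₂
end
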